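/- arXiv:math/0007038 — 3 statements merged into one kernel-verified Lean document; each statement's English description precedes it below -/
import Mathlib

section
/- Let R be a supercommutative superalgebra over ℚ, let R((x⁻¹))[φ] be the superalgebra of formal Laurent series in x⁻¹ (finitely many positive powers of x) together with the odd variable φ, and let T̄ = −Σ_{j≥1}(B_j L_{−j}(x,φ) + N_{j−1/2} G_{−j+1/2}(x,φ)) with (B_j)_{j≥1} in R⁰ and (N_{j−1/2})_{j≥1} in R¹ (see context). Set (x̃, φ̃) = (exp(T̄)(x), exp(T̄)(φ)). Then x̃ is invertible in R((x⁻¹))[φ], and for every H̄ ∈ R((x⁻¹))[φ] the substitution H̄(x̃, φ̃) (defined in the context) is coefficientwise well defined and satisfies H̄(x̃, φ̃) = exp(T̄)(H̄). -/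
set_option linter.unusedSectionVars false
set_option maxHeartbeats 1000000


/- A supercommutative superalgebra over `ℚ` is encoded as a `ℚ`-algebra `R` together with its
grading involution `σ : R →+* R` (`σ = id` on `R⁰`, `σ = −id` on `R¹`; over `ℚ` the data of
the direct sum decomposition `R = R⁰ ⊕ R¹` is equivalent to that of `σ`), with
supercommutativity expressed by: even elements are central, and odd elements anticommute.

An element `a + φb` of `R((x⁻¹))[φ]` is encoded as the pair `(a, b)` of its coefficient
functions `ℤ → R`; membership in `R((x⁻¹))` corresponds to the support being bounded above
(finitely many positive powers of `x`). -/

noncomputable section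

/-- Elements `a + φ b` of `R((x⁻¹))[φ]`, encoded as pairs of coefficient functions. -/
abbrev SLS (R : Type*) := (ℤ → R) × (ℤ → R)

variable {R : Type*} [Ring R] [Algebra ℚ R]

/-- Support bounded above: finitely many positive powers of `x`. -/
def SuppBddAbove (a : ℤ → R) : Prop := ∃ N : ℤ, ∀ n : ℤ, N < n → a n = 0

/-- Convolution product of coefficient functions. -/
def conv (a b : ℤ → R) : ℤ → R := fun n => ∑ᶠ k : ℤ, a k * b (n - k)

/-- The product `(a + φb)(c + φd) = ac + φ(σ(a)d + bc)` of `R((x⁻¹))[φ]`. -/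
def slsMul (σ : R →+* R) (u v : SLS R) : SLS R :=
  (conv u.1 v.1, conv (fun k => σ (u.1 k)) v.2 + conv u.2 v.1)

/-- The unit `1` of `R((x⁻¹))[φ]`. -/
def slsOne : SLS R := (fun n => if n = 0 then 1 else 0, 0)

/-- The element `x` of `R((x⁻¹))[φ]`. -/
def slsX : SLS R := (fun n => if n = 1 then 1 else 0, 0)

/-- The element `φ` of `R((x⁻¹))[φ]`. -/
def slsPhi : SLS R := (0, fun n => if n = 0 then 1 else 0)

/-- Powers in `R((x⁻¹))[φ]`. -/
def slsPow (σ : R →+* R) (u : SLS R) : ℕ → SLS R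
  | 0 => slsOne
  | k + 1 => slsMul σ u (slsPow σ u k)

/-- Left multiplication by the scalar `r ∈ R`: `r(a + φb) = ra + φσ(r)b`. -/
def slsSmulL (σ : R →+* R) (r : R) (u : SLS R) : SLS R :=
  (fun n => r * u.1 n, fun n => σ r * u.2 n)

/-- Coefficientwise sum of a `ℤ`-indexed family of elements of `R((x⁻¹))[φ]`. -/
def slsSumZ (f : ℤ → SLS R) : SLS R :=
  (fun m => ∑ᶠ n : ℤ, (f n).1 m, fun m => ∑ᶠ n : ℤ, (f n).2 m)

/-- `Xⁿ` for `n ∈ ℤ`, where `Y` denotes the inverse of `X`. -/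
def slsZPow (σ : R →+* R) (X Y : SLS R) (n : ℤ) : SLS R :=
  if 0 ≤ n then slsPow σ X n.toNat else slsPow σ Y (-n).toNat

/-- Substitution of the pair `(X, Φ)` for `(x, φ)` in `u = Σ_{n∈ℤ} aₙxⁿ + φΣ_{n∈ℤ} bₙxⁿ`:
`u(X, Φ) = Σ_{n∈ℤ} aₙ Xⁿ + Φ·Σ_{n∈ℤ} bₙ Xⁿ`, coefficientwise, where `Y = X⁻¹` is used for
the negative powers of `X`. -/
def slsSubst (σ : R →+* R) (u X Y Φ : SLS R) : SLS R :=
  slsSumZ (fun n => slsSmulL σ (u.1 n) (slsZPow σ X Y n))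
    + slsMul σ Φ (slsSumZ fun n => slsSmulL σ (u.2 n) (slsZPow σ X Y n))

/-- The operator `T̄ = −Σ_{j≥1}(B_j L_{−j}(x,φ) + N_{j−1/2} G_{−j+1/2}(x,φ))`, concretely
`T̄(a, b) = (Σ_{j≥1} B_j x^(−j+1) a′ + Σ_{j≥1} N_{j−1/2} x^(−j+1) b,
Σ_{j≥1} B_j (x^(−j+1) b′ + ((−j+1)/2) x^(−j) b) + Σ_{j≥1} N_{j−1/2} x^(−j+1) a′)`, written
coefficientwise (the summation index is shifted so that `j + 1` ranges over `j ≥ 1`;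
`N j` stands for `N_{j−1/2}`). -/
def slsTbar (B N : ℕ → R) (u : SLS R) : SLS R :=
  (fun n => ∑ᶠ j : ℕ,
      (B (j + 1) * ((n + (j : ℤ) + 1) • u.1 (n + (j : ℤ) + 1))
        + N (j + 1) * u.2 (n + (j : ℤ))),
   fun n => ∑ᶠ j : ℕ,
      (B (j + 1) * ((n + (j : ℤ) + 1) • u.2 (n + (j : ℤ) + 1)
          + (-(j : ℚ) / 2) • u.2 (n + (j : ℤ) + 1))
        + N (j + 1) * ((n + (j : ℤ) + 1) • u.1 (n + (j : ℤ) + 1))))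

/-- `exp(T̄)(u) = Σ_{k≥0} T̄ᵏ(u)/k!`, coefficientwise. -/
def slsExpBar (B N : ℕ → R) (u : SLS R) : SLS R :=
  (fun n => ∑ᶠ k : ℕ, (k.factorial : ℚ)⁻¹ • (((slsTbar B N)^[k]) u).1 n,
   fun n => ∑ᶠ k : ℕ, (k.factorial : ℚ)⁻¹ • (((slsTbar B N)^[k]) u).2 n)


namespace St6

/-- bounded above by `A` -/
def Bnd (a : ℤ → R) (A : ℤ) : Prop := ∀ n, A < n → a n = 0

lemma Bnd.mono {a : ℤ → R} {A A' : ℤ} (h : Bnd a A) (hA : A ≤ A') : Bnd a A' :=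
  fun n hn => h n (lt_of_le_of_lt hA hn)

/-- master finsum-to-Finset lemma (ℤ) -/
lemma fsZ (f : ℤ → R) (s : Finset ℤ) (h : ∀ i ∉ s, f i = 0) :
    ∑ᶠ i, f i = ∑ i ∈ s, f i :=
  finsum_eq_sum_of_support_subset f (by
    intro i hi; by_contra hs; exact hi (h i hs))

/-- master finsum-to-Finset lemma (ℕ) -/
lemma fsN (f : ℕ → R) (K : ℕ) (h : ∀ i, K ≤ i → f i = 0) :
    ∑ᶠ i, f i = ∑ i ∈ Finset.range K, f i :=
  finsum_eq_sum_of_support_subset f (by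
    intro i hi
    simp only [Function.mem_support, ne_eq] at hi
    simp only [Finset.coe_range, Set.mem_Iio]
    by_contra hs; exact hi (h i (le_of_not_gt hs)))

lemma conv_eq_sum {a b : ℤ → R} {A B₀ : ℤ} (ha : Bnd a A) (hb : Bnd b B₀) (n : ℤ)
    {s : Finset ℤ} (hs : Finset.Icc (n - B₀) A ⊆ s) :
    conv a b n = ∑ k ∈ s, a k * b (n - k) := by
  apply fsZ
  intro i hi
  rcases lt_or_ge A i with h | h
  · rw [ha i h, zero_mul]
  rcases lt_or_ge B₀ (n - i) with h2 | h2
  · rw [hb _ h2, mul_zero]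
  exact absurd (hs (Finset.mem_Icc.2 ⟨by omega, h⟩)) hi

lemma conv_eq_sum' {a b : ℤ → R} {A B₀ : ℤ} (ha : Bnd a A) (hb : Bnd b B₀) (n : ℤ) :
    conv a b n = ∑ k ∈ Finset.Icc (n - B₀) A, a k * b (n - k) :=
  conv_eq_sum ha hb n (le_refl _)

lemma bnd_conv {a b : ℤ → R} {A B₀ : ℤ} (ha : Bnd a A) (hb : Bnd b B₀) :
    Bnd (conv a b) (A + B₀) := by
  intro n hn
  rw [show conv a b n = ∑ k ∈ (∅ : Finset ℤ), a k * b (n - k) from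
    fsZ _ _ (fun i _ => by
      rcases lt_or_ge A i with h | h
      · rw [ha i h, zero_mul]
      · rw [hb _ (by omega), mul_zero]), Finset.sum_empty]

lemma conv_zero_left (b : ℤ → R) : conv (0 : ℤ → R) b = 0 := by
  funext n; simp [conv]

lemma conv_zero_right (a : ℤ → R) : conv a (0 : ℤ → R) = 0 := by
  funext n; simp [conv]

/-- delta function -/
def dl (i : ℤ) : ℤ → R := fun n => if n = i then 1 else 0

lemma Bnd.dl (i : ℤ) : Bnd (dl (R := R) i) i := by
  intro n hn; simp [St6.dl]; omega

lemma conv_dl_left (i : ℤ) (b : ℤ → R) (n : ℤ) : conv (dl i) b n = b (n - i) := by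
  rw [show conv (dl i) b n = (fun k => dl (R := R) i k * b (n - k)) i from
    finsum_eq_single _ i (fun x hx => by simp [dl, hx])]
  simp [dl]

lemma conv_dl_right (a : ℤ → R) (i : ℤ) (n : ℤ) : conv a (dl i) n = a (n - i) := by
  rw [show conv a (dl i) n = (fun k => a k * dl (R := R) i (n - k)) (n - i) from
    finsum_eq_single _ (n - i) (fun x hx => by
      have : n - x ≠ i := by omega
      simp [dl, this])]
  simp [dl]

lemma conv_add_left {a a' b : ℤ → R} {A B₀ : ℤ} (ha : Bnd a A) (ha' : Bnd a' A)
    (hb : Bnd b B₀) (n : ℤ) :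
    conv (a + a') b n = conv a b n + conv a' b n := by
  rw [conv_eq_sum' (fun m hm => by simp [ha m hm, ha' m hm] : Bnd (a + a') A) hb,
    conv_eq_sum' ha hb, conv_eq_sum' ha' hb, ← Finset.sum_add_distrib]
  exact Finset.sum_congr rfl fun k _ => by simp [add_mul]

lemma conv_add_right {a b b' : ℤ → R} {A B₀ : ℤ} (ha : Bnd a A) (hb : Bnd b B₀)
    (hb' : Bnd b' B₀) (n : ℤ) :
    conv a (b + b') n = conv a b n + conv a b' n := by
  rw [conv_eq_sum' ha (fun m hm => by simp [hb m hm, hb' m hm] : Bnd (b + b') B₀),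
    conv_eq_sum' ha hb, conv_eq_sum' ha hb', ← Finset.sum_add_distrib]
  exact Finset.sum_congr rfl fun k _ => by simp [mul_add]

lemma conv_smul_left {a b : ℤ → R} {A B₀ : ℤ} (q : ℚ) (ha : Bnd a A) (hb : Bnd b B₀) (n : ℤ) :
    conv (fun k => q • a k) b n = q • conv a b n := by
  rw [conv_eq_sum' (fun m hm => by simp [ha m hm] : Bnd (fun k => q • a k) A) hb,
    conv_eq_sum' ha hb, Finset.smul_sum]
  exact Finset.sum_congr rfl fun k _ => smul_mul_assoc q _ _

lemma conv_smul_right {a b : ℤ → R} {A B₀ : ℤ} (q : ℚ) (ha : Bnd a A) (hb : Bnd b B₀) (n : ℤ) :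
    conv a (fun k => q • b k) n = q • conv a b n := by
  rw [conv_eq_sum' ha (fun m hm => by simp [hb m hm] : Bnd (fun k => q • b k) B₀),
    conv_eq_sum' ha hb, Finset.smul_sum]
  exact Finset.sum_congr rfl fun k _ => mul_smul_comm q _ _

/-- convolution with a finite sum on the left -/
lemma conv_sum_left {ι : Type*} (s : Finset ι) (f : ι → ℤ → R) {b : ℤ → R} {A B₀ : ℤ}
    (hf : ∀ i ∈ s, Bnd (f i) A) (hb : Bnd b B₀) (n : ℤ) :
    conv (fun k => ∑ i ∈ s, f i k) b n = ∑ i ∈ s, conv (f i) b n := by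
  classical
  induction s using Finset.induction with
  | empty => simp [conv_zero_left]; rw [show (fun k => (0:R)) = (0 : ℤ → R) from rfl,
      conv_zero_left]; rfl
  | insert x s' hx ih =>
    rw [Finset.sum_insert hx]
    have h1 : Bnd (f x) A := hf x (Finset.mem_insert_self x s')
    have h2 : Bnd (fun k => ∑ i ∈ s', f i k) A := fun m hm => by
      simp only []
      exact Finset.sum_eq_zero fun i hi => hf i (Finset.mem_insert_of_mem hi) m hm
    have := conv_add_left (a := f x) (a' := fun k => ∑ i ∈ s', f i k) h1 h2 hb n
    rw [show (f x + fun k => ∑ i ∈ s', f i k) = (fun k => f x k + ∑ i ∈ s', f i k) from rfl]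
      at this
    simp only [Finset.sum_insert hx]
    rw [this, ih (fun i hi => hf i (Finset.mem_insert_of_mem hi))]

lemma conv_sum_right {ι : Type*} (s : Finset ι) (f : ι → ℤ → R) {a : ℤ → R} {A B₀ : ℤ}
    (ha : Bnd a A) (hf : ∀ i ∈ s, Bnd (f i) B₀) (n : ℤ) :
    conv a (fun k => ∑ i ∈ s, f i k) n = ∑ i ∈ s, conv a (f i) n := by
  classical
  induction s using Finset.induction with
  | empty => simp; rw [show (fun k => (0:R)) = (0 : ℤ → R) from rfl, conv_zero_right]; rfl
  | insert x s' hx ih =>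
    rw [Finset.sum_insert hx]
    have h1 : Bnd (f x) B₀ := hf x (Finset.mem_insert_self x s')
    have h2 : Bnd (fun k => ∑ i ∈ s', f i k) B₀ := fun m hm =>
      Finset.sum_eq_zero fun i hi => hf i (Finset.mem_insert_of_mem hi) m hm
    have := conv_add_right (b := f x) (b' := fun k => ∑ i ∈ s', f i k) ha h1 h2 n
    rw [show (f x + fun k => ∑ i ∈ s', f i k) = (fun k => f x k + ∑ i ∈ s', f i k) from rfl]
      at this
    simp only [Finset.sum_insert hx]
    rw [this, ih (fun i hi => hf i (Finset.mem_insert_of_mem hi))]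

end St6
namespace St6

variable {R : Type*} [Ring R] [Algebra ℚ R]

/-- weight bound: `u.1 n = 0` when `2n > w`, `u.2 n = 0` when `2n+1 > w`. -/
def Wt (u : SLS R) (w : ℤ) : Prop :=
  (∀ n, w < 2*n → u.1 n = 0) ∧ (∀ n, w < 2*n + 1 → u.2 n = 0)

lemma Wt.mono {u : SLS R} {w w' : ℤ} (h : Wt u w) (hw : w ≤ w') : Wt u w' :=
  ⟨fun n hn => h.1 n (by omega), fun n hn => h.2 n (by omega)⟩

lemma Wt.zero (w : ℤ) : Wt (0 : SLS R) w := ⟨fun _ _ => rfl, fun _ _ => rfl⟩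

lemma Wt.add {u v : SLS R} {w : ℤ} (hu : Wt u w) (hv : Wt v w) : Wt (u + v) w :=
  ⟨fun n hn => by simp [hu.1 n hn, hv.1 n hn],
   fun n hn => by simp [hu.2 n hn, hv.2 n hn]⟩

lemma Wt.smul {u : SLS R} {w : ℤ} (q : ℚ) (hu : Wt u w) : Wt (q • u) w :=
  ⟨fun n hn => by simp [hu.1 n hn], fun n hn => by simp [hu.2 n hn]⟩

lemma Wt.sub {u v : SLS R} {w : ℤ} (hu : Wt u w) (hv : Wt v w) : Wt (u - v) w :=
  ⟨fun n hn => by simp [hu.1 n hn, hv.1 n hn],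
   fun n hn => by simp [hu.2 n hn, hv.2 n hn]⟩

lemma Wt.sum {ι : Type*} {s : Finset ι} {f : ι → SLS R} {w : ℤ}
    (hf : ∀ i ∈ s, Wt (f i) w) : Wt (∑ i ∈ s, f i) w :=
  ⟨fun n hn => by
    rw [Prod.fst_sum, Finset.sum_apply]
    exact Finset.sum_eq_zero fun i hi => (hf i hi).1 n hn,
   fun n hn => by
    rw [Prod.snd_sum, Finset.sum_apply]
    exact Finset.sum_eq_zero fun i hi => (hf i hi).2 n hn⟩

lemma Wt.bnd1 {u : SLS R} {w : ℤ} (h : Wt u w) : Bnd u.1 (max w 0) :=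
  fun n hn => h.1 n (by omega)

lemma Wt.bnd2 {u : SLS R} {w : ℤ} (h : Wt u w) : Bnd u.2 (max w 0) :=
  fun n hn => h.2 n (by omega)

lemma Wt.of_bnd {u : SLS R} {A1 A2 : ℤ} (h1 : Bnd u.1 A1) (h2 : Bnd u.2 A2) :
    Wt u (max (2*A1) (2*A2+1)) :=
  ⟨fun n hn => h1 n (by omega), fun n hn => h2 n (by omega)⟩

/-- the monomial `xⁱ` -/
def Ee (i : ℤ) : SLS R := (dl i, 0)

lemma wt_Ee (i : ℤ) : Wt (Ee (R := R) i) (2*i) :=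
  ⟨fun n hn => by simp [Ee, dl]; omega, fun n _ => rfl⟩

lemma slsOne_eq : (slsOne : SLS R) = Ee 0 := rfl
lemma slsX_eq : (slsX : SLS R) = Ee 1 := rfl

lemma wt_phi : Wt (slsPhi : SLS R) 1 :=
  ⟨fun n _ => rfl, fun n hn => by simp [slsPhi]; omega⟩

lemma Wt.mul (σ : R →+* R) {u v : SLS R} {w w' : ℤ} (hu : Wt u w) (hv : Wt v w') :
    Wt (slsMul σ u v) (w + w') := by
  constructor
  · intro n hn
    show conv u.1 v.1 n = 0
    rw [show conv u.1 v.1 n = ∑ k ∈ (∅ : Finset ℤ), u.1 k * v.1 (n - k) from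
      fsZ _ _ fun i _ => ?_, Finset.sum_empty]
    rcases lt_or_ge w (2*i) with h | h
    · rw [hu.1 i h, zero_mul]
    · rw [hv.1 (n - i) (by omega), mul_zero]
  · intro n hn
    show conv (fun k => σ (u.1 k)) v.2 n + conv u.2 v.1 n = 0
    rw [show conv (fun k => σ (u.1 k)) v.2 n = ∑ k ∈ (∅ : Finset ℤ), σ (u.1 k) * v.2 (n - k) from
        fsZ _ _ fun i _ => ?_,
      show conv u.2 v.1 n = ∑ k ∈ (∅ : Finset ℤ), u.2 k * v.1 (n - k) from
        fsZ _ _ fun i _ => ?_]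
    · simp
    · show u.2 i * v.1 (n - i) = 0
      rcases lt_or_ge w (2*i+1) with h | h
      · rw [hu.2 i h, zero_mul]
      · rw [hv.1 (n - i) (by omega), mul_zero]
    · show σ (u.1 i) * v.2 (n - i) = 0
      rcases lt_or_ge w (2*i) with h | h
      · rw [hu.1 i h, map_zero, zero_mul]
      · rw [hv.2 (n - i) (by omega), mul_zero]

section TB
variable (B N : ℕ → R)

lemma tbar_coeff1 {u : SLS R} {w : ℤ} (hu : Wt u w) (n : ℤ) {K : ℕ} (hK : w - 2*n ≤ K) :
    (slsTbar B N u).1 n =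
      ∑ j ∈ Finset.range K,
        (B (j + 1) * ((n + (j : ℤ) + 1) • u.1 (n + (j : ℤ) + 1))
          + N (j + 1) * u.2 (n + (j : ℤ))) := by
  apply fsN
  intro j hj
  have hj' : w - 2*n ≤ (j : ℤ) := le_trans hK (by exact_mod_cast hj)
  rw [hu.1 (n + (j : ℤ) + 1) (by omega), hu.2 (n + (j : ℤ)) (by omega)]
  simp

lemma tbar_coeff2 {u : SLS R} {w : ℤ} (hu : Wt u w) (n : ℤ) {K : ℕ} (hK : w - 2*n - 1 ≤ K) :
    (slsTbar B N u).2 n =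
      ∑ j ∈ Finset.range K,
        (B (j + 1) * ((n + (j : ℤ) + 1) • u.2 (n + (j : ℤ) + 1)
            + (-(j : ℚ) / 2) • u.2 (n + (j : ℤ) + 1))
          + N (j + 1) * ((n + (j : ℤ) + 1) • u.1 (n + (j : ℤ) + 1))) := by
  apply fsN
  intro j hj
  have hj' : w - 2*n - 1 ≤ (j : ℤ) := le_trans hK (by exact_mod_cast hj)
  rw [hu.1 (n + (j : ℤ) + 1) (by omega), hu.2 (n + (j : ℤ) + 1) (by omega)]
  simp

lemma Wt.tbar {u : SLS R} {w : ℤ} (hu : Wt u w) : Wt (slsTbar B N u) (w - 1) := by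
  constructor
  · intro n hn
    rw [tbar_coeff1 B N hu n (K := 0) (by omega), Finset.sum_range_zero]
  · intro n hn
    rw [tbar_coeff2 B N hu n (K := 0) (by omega), Finset.sum_range_zero]

lemma Wt.tbar_iter {u : SLS R} {w : ℤ} (hu : Wt u w) (k : ℕ) :
    Wt ((slsTbar B N)^[k] u) (w - k) := by
  induction k with
  | zero => simpa using hu
  | succ k ih =>
    rw [Function.iterate_succ_apply']
    refine (ih.tbar B N).mono ?_
    omega

/-- `m • (q • x) = q • (m • x)` -/
lemma zq_comm (m : ℤ) (q : ℚ) (x : R) : m • (q • x) = q • (m • x) := by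
  rw [← Int.cast_smul_eq_zsmul ℚ m (q • x), ← Int.cast_smul_eq_zsmul ℚ m x,
    smul_smul, smul_smul, mul_comm]

lemma tbar_add {u v : SLS R} {w : ℤ} (hu : Wt u w) (hv : Wt v w) :
    slsTbar B N (u + v) = slsTbar B N u + slsTbar B N v := by
  have huv : Wt (u + v) w := hu.add hv
  ext n
  · rw [show ((slsTbar B N u + slsTbar B N v).1 n)
        = (slsTbar B N u).1 n + (slsTbar B N v).1 n from rfl,
      tbar_coeff1 B N huv n (K := (w - 2*n).toNat) (by omega),
      tbar_coeff1 B N hu n (K := (w - 2*n).toNat) (by omega),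
      tbar_coeff1 B N hv n (K := (w - 2*n).toNat) (by omega), ← Finset.sum_add_distrib]
    refine Finset.sum_congr rfl fun j _ => ?_
    simp only [Prod.fst_add, Prod.snd_add, Pi.add_apply, smul_add, mul_add]
    abel
  · rw [show ((slsTbar B N u + slsTbar B N v).2 n)
        = (slsTbar B N u).2 n + (slsTbar B N v).2 n from rfl,
      tbar_coeff2 B N huv n (K := (w - 2*n).toNat) (by omega),
      tbar_coeff2 B N hu n (K := (w - 2*n).toNat) (by omega),
      tbar_coeff2 B N hv n (K := (w - 2*n).toNat) (by omega), ← Finset.sum_add_distrib]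
    refine Finset.sum_congr rfl fun j _ => ?_
    simp only [Prod.fst_add, Prod.snd_add, Pi.add_apply, smul_add, mul_add]
    abel

lemma tbar_smul (q : ℚ) {u : SLS R} {w : ℤ} (hu : Wt u w) :
    slsTbar B N (q • u) = q • slsTbar B N u := by
  ext n
  · rw [show ((q • slsTbar B N u).1 n) = q • (slsTbar B N u).1 n from rfl,
      tbar_coeff1 B N (hu.smul q) n (K := (w - 2*n).toNat) (by omega),
      tbar_coeff1 B N hu n (K := (w - 2*n).toNat) (by omega), Finset.smul_sum]
    refine Finset.sum_congr rfl fun j _ => ?_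
    simp only [Prod.smul_fst, Prod.smul_snd, Pi.smul_apply, zq_comm, mul_smul_comm, smul_add]
  · rw [show ((q • slsTbar B N u).2 n) = q • (slsTbar B N u).2 n from rfl,
      tbar_coeff2 B N (hu.smul q) n (K := (w - 2*n).toNat) (by omega),
      tbar_coeff2 B N hu n (K := (w - 2*n).toNat) (by omega), Finset.smul_sum]
    refine Finset.sum_congr rfl fun j _ => ?_
    simp only [Prod.smul_fst, Prod.smul_snd, Pi.smul_apply, zq_comm,
      smul_comm (-(j:ℚ)/2) q, ← smul_add, mul_smul_comm]

lemma tbar_zero : slsTbar B N (0 : SLS R) = 0 := by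
  ext n
  · show ∑ᶠ _ : ℕ, _ = ((0 : SLS R)).1 n
    rw [show ((0 : SLS R)).1 n = 0 from rfl]
    exact finsum_eq_zero_of_forall_eq_zero fun j => by simp
  · show ∑ᶠ _ : ℕ, _ = ((0 : SLS R)).2 n
    rw [show ((0 : SLS R)).2 n = 0 from rfl]
    exact finsum_eq_zero_of_forall_eq_zero fun j => by simp

lemma tbar_sum {ι : Type*} (s : Finset ι) (f : ι → SLS R) {w : ℤ}
    (hf : ∀ i ∈ s, Wt (f i) w) :
    slsTbar B N (∑ i ∈ s, f i) = ∑ i ∈ s, slsTbar B N (f i) := by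
  classical
  induction s using Finset.induction with
  | empty =>
    simp only [Finset.sum_empty]
    exact tbar_zero B N
  | @insert x s' hx ih =>
    rw [Finset.sum_insert hx, Finset.sum_insert hx,
      tbar_add B N (hf x (Finset.mem_insert_self x s'))
        (Wt.sum fun i hi => hf i (Finset.mem_insert_of_mem hi)),
      ih (fun i hi => hf i (Finset.mem_insert_of_mem hi))]

end TB
end St6
namespace St6

variable {R : Type*} [Ring R] [Algebra ℚ R]

lemma sigma_qsmul (σ : R →+* R) (q : ℚ) (x : R) : σ (q • x) = q • σ x :=
  map_rat_smul σ.toAddMonoidHom q x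

section SC
variable (σ : R →+* R) (B N : ℕ → R)

lemma Nsoak (hσ : ∀ r : R, σ (σ r) = r)
    (hcomm : ∀ u v : R, σ u = u → u * v = v * u)
    (hanti : ∀ u v : R, σ u = -u → σ v = -v → u * v = -(v * u))
    (hN : ∀ j, σ (N j) = -(N j)) (j : ℕ) (r : R) :
    r * N j = N j * σ r := by
  set e := ((1:ℚ)/2) • (r + σ r) with hedef
  set o := ((1:ℚ)/2) • (r - σ r) with hodef
  have hr : r = e + o := by
    rw [hedef, hodef, ← smul_add,
      show (r + σ r) + (r - σ r) = (2:ℚ) • r by rw [two_smul]; abel, smul_smul]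
    norm_num
  have hσr : σ r = e - o := by
    rw [hedef, hodef, ← smul_sub,
      show (r + σ r) - (r - σ r) = (2:ℚ) • σ r by rw [two_smul]; abel, smul_smul]
    norm_num
  have hse : σ e = e := by
    rw [hedef, sigma_qsmul, map_add, hσ, add_comm]
  have hso : σ o = -o := by
    rw [hodef, sigma_qsmul, map_sub, hσ, ← smul_neg, neg_sub]
  calc r * N j = e * N j + o * N j := by rw [← add_mul, ← hr]
    _ = N j * e - N j * o := by
        rw [hcomm e (N j) hse, hanti o (N j) hso (hN j), sub_eq_add_neg]
    _ = N j * σ r := by rw [hσr, mul_sub]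

lemma Nsoak' (hσ : ∀ r : R, σ (σ r) = r)
    (hcomm : ∀ u v : R, σ u = u → u * v = v * u)
    (hanti : ∀ u v : R, σ u = -u → σ v = -v → u * v = -(v * u))
    (hN : ∀ j, σ (N j) = -(N j)) (j : ℕ) (r : R) :
    σ r * N j = N j * r := by
  have := Nsoak σ N hσ hcomm hanti hN j (σ r)
  rwa [hσ] at this

lemma Wt.smulL {u : SLS R} {w : ℤ} (r : R) (hu : Wt u w) : Wt (slsSmulL σ r u) w :=
  ⟨fun n hn => by show r * u.1 n = 0; rw [hu.1 n hn, mul_zero],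
   fun n hn => by show σ r * u.2 n = 0; rw [hu.2 n hn, mul_zero]⟩

variable (hσ : ∀ r : R, σ (σ r) = r)
  (hcomm : ∀ u v : R, σ u = u → u * v = v * u)
  (hanti : ∀ u v : R, σ u = -u → σ v = -v → u * v = -(v * u))
  (hB : ∀ j, σ (B j) = B j) (hN : ∀ j, σ (N j) = -(N j))

include hσ hcomm hanti hB hN in
lemma tbar_smulL (r : R) {u : SLS R} {w : ℤ} (hu : Wt u w) :
    slsTbar B N (slsSmulL σ r u) = slsSmulL σ r (slsTbar B N u) := by
  have hBc : ∀ j (x : R), B j * x = x * B j := fun j x => hcomm (B j) x (hB j)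
  have hNs : ∀ j (x : R), x * N j = N j * σ x := Nsoak σ N hσ hcomm hanti hN
  have hNs' : ∀ j (x : R), σ x * N j = N j * x := Nsoak' σ N hσ hcomm hanti hN
  ext n
  · rw [show (slsSmulL σ r (slsTbar B N u)).1 n = r * (slsTbar B N u).1 n from rfl,
      tbar_coeff1 B N (hu.smulL σ r) n (K := (w - 2*n).toNat) (by omega),
      tbar_coeff1 B N hu n (K := (w - 2*n).toNat) (by omega), Finset.mul_sum]
    refine Finset.sum_congr rfl fun j _ => ?_
    show B (j+1) * ((n + (j:ℤ) + 1) • (r * u.1 _)) + N (j+1) * (σ r * u.2 _) = _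
    simp only [mul_add, mul_smul_comm, ← mul_assoc]
    rw [hBc (j+1) r, ← hNs (j+1) r]
  · rw [show (slsSmulL σ r (slsTbar B N u)).2 n = σ r * (slsTbar B N u).2 n from rfl,
      tbar_coeff2 B N (hu.smulL σ r) n (K := (w - 2*n).toNat) (by omega),
      tbar_coeff2 B N hu n (K := (w - 2*n).toNat) (by omega), Finset.mul_sum]
    refine Finset.sum_congr rfl fun j _ => ?_
    show B (j+1) * ((n + (j:ℤ) + 1) • (σ r * u.2 _) + (-(j:ℚ)/2) • (σ r * u.2 _))
        + N (j+1) * ((n + (j:ℤ) + 1) • (r * u.1 _)) = _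
    simp only [mul_add, mul_smul_comm, ← mul_assoc]
    rw [hBc (j+1) (σ r), ← hNs' (j+1) r]

include hσ hcomm hanti hB hN in
lemma tbar_iter_smulL (r : R) {u : SLS R} {w : ℤ} (hu : Wt u w) (k : ℕ) :
    (slsTbar B N)^[k] (slsSmulL σ r u) = slsSmulL σ r ((slsTbar B N)^[k] u) := by
  induction k with
  | zero => rfl
  | succ k ih =>
    rw [Function.iterate_succ_apply', Function.iterate_succ_apply', ih,
      tbar_smulL σ B N hσ hcomm hanti hB hN r (hu.tbar_iter B N k)]

end SC

section EXP
variable (B N : ℕ → R)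

lemma tbar_iter_add {u v : SLS R} {w : ℤ} (hu : Wt u w) (hv : Wt v w) (k : ℕ) :
    (slsTbar B N)^[k] (u + v) = (slsTbar B N)^[k] u + (slsTbar B N)^[k] v := by
  induction k with
  | zero => rfl
  | succ k ih =>
    rw [Function.iterate_succ_apply', Function.iterate_succ_apply',
      Function.iterate_succ_apply', ih,
      tbar_add B N (hu.tbar_iter B N k) (hv.tbar_iter B N k)]

lemma tbar_iter_smul (q : ℚ) {u : SLS R} {w : ℤ} (hu : Wt u w) (k : ℕ) :
    (slsTbar B N)^[k] (q • u) = q • (slsTbar B N)^[k] u := by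
  induction k with
  | zero => rfl
  | succ k ih =>
    rw [Function.iterate_succ_apply', Function.iterate_succ_apply', ih,
      tbar_smul B N q (hu.tbar_iter B N k)]

lemma tbar_iter_sum {ι : Type*} (s : Finset ι) (f : ι → SLS R) {w : ℤ}
    (hf : ∀ i ∈ s, Wt (f i) w) (k : ℕ) :
    (slsTbar B N)^[k] (∑ i ∈ s, f i) = ∑ i ∈ s, (slsTbar B N)^[k] (f i) := by
  induction k with
  | zero => rfl
  | succ k ih =>
    rw [Function.iterate_succ_apply', ih,
      tbar_sum B N s _ (fun i hi => (hf i hi).tbar_iter B N k)]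
    exact Finset.sum_congr rfl fun i _ => (Function.iterate_succ_apply' _ _ _).symm

lemma tbar_iter_zero (k : ℕ) : (slsTbar B N)^[k] (0 : SLS R) = 0 := by
  induction k with
  | zero => rfl
  | succ k ih => rw [Function.iterate_succ_apply', ih, tbar_zero]

lemma exp_zero : slsExpBar B N (0 : SLS R) = 0 := by
  ext n
  · rw [show ((0 : SLS R)).1 n = 0 from rfl]
    refine finsum_eq_zero_of_forall_eq_zero fun k => ?_
    rw [tbar_iter_zero B N k]
    simp
  · rw [show ((0 : SLS R)).2 n = 0 from rfl]
    refine finsum_eq_zero_of_forall_eq_zero fun k => ?_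
    rw [tbar_iter_zero B N k]
    simp

/-- truncated exponential -/
def Sexp (K : ℕ) (u : SLS R) : SLS R :=
  ∑ k ∈ Finset.range K, (k.factorial : ℚ)⁻¹ • (slsTbar B N)^[k] u

lemma exp_coeff1 {u : SLS R} {w : ℤ} (hu : Wt u w) (n : ℤ) {K : ℕ} (hK : w - 2*n < K) :
    (slsExpBar B N u).1 n =
      ∑ k ∈ Finset.range K, (k.factorial : ℚ)⁻¹ • ((slsTbar B N)^[k] u).1 n := by
  apply fsN
  intro k hk
  have : w - (k:ℤ) < 2*n := by
    have : (K:ℤ) ≤ k := by exact_mod_cast hk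
    omega
  rw [(hu.tbar_iter B N k).1 n this, smul_zero]

lemma exp_coeff2 {u : SLS R} {w : ℤ} (hu : Wt u w) (n : ℤ) {K : ℕ} (hK : w - 2*n - 1 < K) :
    (slsExpBar B N u).2 n =
      ∑ k ∈ Finset.range K, (k.factorial : ℚ)⁻¹ • ((slsTbar B N)^[k] u).2 n := by
  apply fsN
  intro k hk
  have : w - (k:ℤ) < 2*n + 1 := by
    have : (K:ℤ) ≤ k := by exact_mod_cast hk
    omega
  rw [(hu.tbar_iter B N k).2 n this, smul_zero]

lemma Sexp_coeff1 (K : ℕ) (u : SLS R) (n : ℤ) :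
    (Sexp B N K u).1 n = ∑ k ∈ Finset.range K, (k.factorial : ℚ)⁻¹ • ((slsTbar B N)^[k] u).1 n := by
  rw [Sexp, Prod.fst_sum, Finset.sum_apply]
  rfl

lemma Sexp_coeff2 (K : ℕ) (u : SLS R) (n : ℤ) :
    (Sexp B N K u).2 n = ∑ k ∈ Finset.range K, (k.factorial : ℚ)⁻¹ • ((slsTbar B N)^[k] u).2 n := by
  rw [Sexp, Prod.snd_sum, Finset.sum_apply]
  rfl

lemma Wt.exp {u : SLS R} {w : ℤ} (hu : Wt u w) : Wt (slsExpBar B N u) w := by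
  constructor
  · intro n hn
    rw [exp_coeff1 B N hu n (K := ((w - 2*n).toNat + 1)) (by omega)]
    refine Finset.sum_eq_zero fun k _ => ?_
    have h := hu.tbar_iter B N k
    rw [h.1 n (by omega), smul_zero]
  · intro n hn
    rw [exp_coeff2 B N hu n (K := ((w - 2*n).toNat + 1)) (by omega)]
    refine Finset.sum_eq_zero fun k _ => ?_
    have h := hu.tbar_iter B N k
    rw [h.2 n (by omega), smul_zero]

lemma Wt.sexp {u : SLS R} {w : ℤ} (hu : Wt u w) (K : ℕ) : Wt (Sexp B N K u) w :=
  Wt.sum fun k _ => ((hu.tbar_iter B N k).mono (by omega)).smul _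

lemma exp_sub_sexp {u : SLS R} {w : ℤ} (hu : Wt u w) (K : ℕ) :
    Wt (slsExpBar B N u - Sexp B N K u) (w - K) := by
  constructor
  · intro n hn
    rw [show (slsExpBar B N u - Sexp B N K u).1 n = (slsExpBar B N u).1 n - (Sexp B N K u).1 n
        from rfl,
      exp_coeff1 B N hu n (K := K) (by omega), Sexp_coeff1, sub_self]
  · intro n hn
    rw [show (slsExpBar B N u - Sexp B N K u).2 n = (slsExpBar B N u).2 n - (Sexp B N K u).2 n
        from rfl,
      exp_coeff2 B N hu n (K := K) (by omega), Sexp_coeff2, sub_self]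

lemma exp_add {u v : SLS R} {w : ℤ} (hu : Wt u w) (hv : Wt v w) :
    slsExpBar B N (u + v) = slsExpBar B N u + slsExpBar B N v := by
  ext n
  · rw [show (slsExpBar B N u + slsExpBar B N v).1 n
        = (slsExpBar B N u).1 n + (slsExpBar B N v).1 n from rfl,
      exp_coeff1 B N (hu.add hv) n (K := (w - 2*n).toNat + 1) (by omega),
      exp_coeff1 B N hu n (K := (w - 2*n).toNat + 1) (by omega),
      exp_coeff1 B N hv n (K := (w - 2*n).toNat + 1) (by omega), ← Finset.sum_add_distrib]
    refine Finset.sum_congr rfl fun k _ => ?_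
    rw [tbar_iter_add B N hu hv k]
    show _ • (((slsTbar B N)^[k] u).1 n + ((slsTbar B N)^[k] v).1 n) = _
    rw [smul_add]
  · rw [show (slsExpBar B N u + slsExpBar B N v).2 n
        = (slsExpBar B N u).2 n + (slsExpBar B N v).2 n from rfl,
      exp_coeff2 B N (hu.add hv) n (K := (w - 2*n).toNat + 1) (by omega),
      exp_coeff2 B N hu n (K := (w - 2*n).toNat + 1) (by omega),
      exp_coeff2 B N hv n (K := (w - 2*n).toNat + 1) (by omega), ← Finset.sum_add_distrib]
    refine Finset.sum_congr rfl fun k _ => ?_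
    rw [tbar_iter_add B N hu hv k]
    show _ • (((slsTbar B N)^[k] u).2 n + ((slsTbar B N)^[k] v).2 n) = _
    rw [smul_add]

lemma exp_sum {ι : Type*} (s : Finset ι) (f : ι → SLS R) {w : ℤ}
    (hf : ∀ i ∈ s, Wt (f i) w) :
    slsExpBar B N (∑ i ∈ s, f i) = ∑ i ∈ s, slsExpBar B N (f i) := by
  classical
  induction s using Finset.induction with
  | empty =>
    simp only [Finset.sum_empty]
    exact exp_zero B N
  | @insert x s' hx ih =>
    rw [Finset.sum_insert hx, Finset.sum_insert hx,
      exp_add B N (hf x (Finset.mem_insert_self x s'))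
        (Wt.sum fun i hi => hf i (Finset.mem_insert_of_mem hi)),
      ih (fun i hi => hf i (Finset.mem_insert_of_mem hi))]

lemma exp_smulL (σ : R →+* R) (hσ : ∀ r : R, σ (σ r) = r)
    (hcomm : ∀ u v : R, σ u = u → u * v = v * u)
    (hanti : ∀ u v : R, σ u = -u → σ v = -v → u * v = -(v * u))
    (hB : ∀ j, σ (B j) = B j) (hN : ∀ j, σ (N j) = -(N j))
    (r : R) {u : SLS R} {w : ℤ} (hu : Wt u w) :
    slsExpBar B N (slsSmulL σ r u) = slsSmulL σ r (slsExpBar B N u) := by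
  ext n
  · rw [show (slsSmulL σ r (slsExpBar B N u)).1 n = r * (slsExpBar B N u).1 n from rfl,
      exp_coeff1 B N (hu.smulL σ r) n (K := (w - 2*n).toNat + 1) (by omega),
      exp_coeff1 B N hu n (K := (w - 2*n).toNat + 1) (by omega), Finset.mul_sum]
    refine Finset.sum_congr rfl fun k _ => ?_
    rw [tbar_iter_smulL σ B N hσ hcomm hanti hB hN r hu k]
    show _ • (r * ((slsTbar B N)^[k] u).1 n) = r * _ • ((slsTbar B N)^[k] u).1 n
    rw [mul_smul_comm]
  · rw [show (slsSmulL σ r (slsExpBar B N u)).2 n = σ r * (slsExpBar B N u).2 n from rfl,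
      exp_coeff2 B N (hu.smulL σ r) n (K := (w - 2*n).toNat + 1) (by omega),
      exp_coeff2 B N hu n (K := (w - 2*n).toNat + 1) (by omega), Finset.mul_sum]
    refine Finset.sum_congr rfl fun k _ => ?_
    rw [tbar_iter_smulL σ B N hσ hcomm hanti hB hN r hu k]
    show _ • (σ r * ((slsTbar B N)^[k] u).2 n) = σ r * _ • ((slsTbar B N)^[k] u).2 n
    rw [mul_smul_comm]

end EXP
end St6
namespace St6

variable {R : Type*} [Ring R] [Algebra ℚ R]

lemma sum_shift (lo hi c : ℤ) (f : ℤ → R) :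
    ∑ k ∈ Finset.Icc lo hi, f k = ∑ k ∈ Finset.Icc (lo + c) (hi + c), f (k - c) := by
  refine Finset.sum_nbij' (fun k => k + c) (fun k => k - c) ?_ ?_ ?_ ?_ ?_ <;>
    intros <;> simp_all [Finset.mem_Icc] <;> omega

section PJ
variable (B N : ℕ → R)

/-- the `j`-th even part of `T̄` -/
def Ej (j : ℕ) (u : SLS R) : SLS R :=
  (fun n => B (j + 1) * ((n + (j : ℤ) + 1) • u.1 (n + (j : ℤ) + 1)),
   fun n => B (j + 1) * ((n + (j : ℤ) + 1) • u.2 (n + (j : ℤ) + 1)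
     + (-(j : ℚ) / 2) • u.2 (n + (j : ℤ) + 1)))

/-- the `j`-th odd part of `T̄` -/
def Kj (j : ℕ) (u : SLS R) : SLS R :=
  (fun n => N (j + 1) * u.2 (n + (j : ℤ)),
   fun n => N (j + 1) * ((n + (j : ℤ) + 1) • u.1 (n + (j : ℤ) + 1)))

lemma tbar_coeff1' {u : SLS R} {w : ℤ} (hu : Wt u w) (n : ℤ) {K : ℕ} (hK : w - 2*n ≤ K) :
    (slsTbar B N u).1 n = ∑ j ∈ Finset.range K, ((Ej B j u).1 n + (Kj N j u).1 n) :=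
  tbar_coeff1 B N hu n hK

lemma tbar_coeff2' {u : SLS R} {w : ℤ} (hu : Wt u w) (n : ℤ) {K : ℕ} (hK : w - 2*n - 1 ≤ K) :
    (slsTbar B N u).2 n = ∑ j ∈ Finset.range K, ((Ej B j u).2 n + (Kj N j u).2 n) :=
  tbar_coeff2 B N hu n hK

lemma Wt.ej {u : SLS R} {w : ℤ} (hu : Wt u w) (j : ℕ) : Wt (Ej B j u) (w - 1) := by
  constructor
  · intro n hn
    show B (j+1) * ((n + (j:ℤ) + 1) • u.1 (n + (j:ℤ) + 1)) = 0
    rw [hu.1 _ (by omega)]; simp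
  · intro n hn
    show B (j+1) * ((n + (j:ℤ) + 1) • u.2 (n + (j:ℤ) + 1)
      + (-(j:ℚ)/2) • u.2 (n + (j:ℤ) + 1)) = 0
    rw [hu.2 _ (by omega)]; simp

lemma Wt.kj {u : SLS R} {w : ℤ} (hu : Wt u w) (j : ℕ) : Wt (Kj N j u) (w - 1) := by
  constructor
  · intro n hn
    show N (j+1) * u.2 (n + (j:ℤ)) = 0
    rw [hu.2 _ (by omega)]; simp
  · intro n hn
    show N (j+1) * ((n + (j:ℤ) + 1) • u.1 (n + (j:ℤ) + 1)) = 0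
    rw [hu.1 _ (by omega)]; simp

end PJ
end St6
namespace St6

variable {R : Type*} [Ring R] [Algebra ℚ R]

section EJM
variable (σ : R →+* R) (B : ℕ → R)

lemma Ej_mul (hcomm : ∀ u v : R, σ u = u → u * v = v * u) (hB : ∀ j, σ (B j) = B j)
    (j : ℕ) {u v : SLS R} {w w' : ℤ} (hu : Wt u w) (hv : Wt v w') :
    Ej B j (slsMul σ u v) = slsMul σ (Ej B j u) v + slsMul σ u (Ej B j v) := by
  have hBc : ∀ x : R, B (j+1) * x = x * B (j+1) := fun x => hcomm _ x (hB _)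
  set Au := max w 0 with hAu
  set Av := max w' 0 with hAv
  have hu1 : Bnd u.1 Au := hu.bnd1
  have hu2 : Bnd u.2 Au := hu.bnd2
  have hv1 : Bnd v.1 Av := hv.bnd1
  have hv2 : Bnd v.2 Av := hv.bnd2
  have hσu1 : Bnd (fun k => σ (u.1 k)) Au := fun m hm => by
    show σ (u.1 m) = 0; rw [hu1 m hm, map_zero]
  have hEu1 : Bnd (Ej B j u).1 (Au - (j:ℤ) - 1) := fun m hm => by
    show B (j+1) * ((m + (j:ℤ) + 1) • u.1 (m + (j:ℤ) + 1)) = 0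
    rw [hu1 _ (by omega)]; simp
  have hEu2 : Bnd (Ej B j u).2 (Au - (j:ℤ) - 1) := fun m hm => by
    show B (j+1) * ((m + (j:ℤ) + 1) • u.2 (m + (j:ℤ) + 1)
      + (-(j:ℚ)/2) • u.2 (m + (j:ℤ) + 1)) = 0
    rw [hu2 _ (by omega)]; simp
  have hEv1 : Bnd (Ej B j v).1 (Av - (j:ℤ) - 1) := fun m hm => by
    show B (j+1) * ((m + (j:ℤ) + 1) • v.1 (m + (j:ℤ) + 1)) = 0
    rw [hv1 _ (by omega)]; simp
  have hEv2 : Bnd (Ej B j v).2 (Av - (j:ℤ) - 1) := fun m hm => by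
    show B (j+1) * ((m + (j:ℤ) + 1) • v.2 (m + (j:ℤ) + 1)
      + (-(j:ℚ)/2) • v.2 (m + (j:ℤ) + 1)) = 0
    rw [hv2 _ (by omega)]; simp
  have hσEu1 : (fun k => σ ((Ej B j u).1 k))
      = fun k => B (j+1) * ((k + (j:ℤ) + 1) • σ (u.1 (k + (j:ℤ) + 1))) := by
    funext k
    show σ (B (j+1) * ((k + (j:ℤ) + 1) • u.1 _)) = _
    rw [map_mul, hB, map_zsmul]
  have hσEu1b : Bnd (fun k => B (j+1) * ((k + (j:ℤ) + 1) • σ (u.1 (k + (j:ℤ) + 1))))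
      (Au - (j:ℤ) - 1) := fun m hm => by
    show B (j+1) * ((m + (j:ℤ) + 1) • σ (u.1 (m + (j:ℤ) + 1))) = 0
    rw [hu1 _ (by omega), map_zero]; simp
  -- core identities
  have coreA : ∀ (m k : ℤ) (x y : R), B (j+1) * (m • (x * y))
      = (B (j+1) * (k • x)) * y + x * (B (j+1) * ((m - k) • y)) := by
    intro m k x y
    have hm : m • (B (j+1) * x * y) = k • (B (j+1) * x * y) + (m - k) • (B (j+1) * x * y) := by
      rw [← add_smul, show k + (m - k) = m by ring]
    simp only [mul_smul_comm, smul_mul_assoc, ← mul_assoc]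
    rw [← hBc x, hm]
  have coreQ : ∀ (c : ℚ) (x y : R), B (j+1) * (c • (x * y)) = x * (B (j+1) * (c • y)) := by
    intro c x y
    simp only [mul_smul_comm, smul_mul_assoc, ← mul_assoc]
    rw [← hBc x]
  have coreQ' : ∀ (c : ℚ) (x y : R), B (j+1) * (c • (x * y)) = (B (j+1) * (c • x)) * y := by
    intro c x y
    simp only [mul_smul_comm, smul_mul_assoc, ← mul_assoc]
  have coreB2 : ∀ (m k : ℤ) (x y : R),
      B (j+1) * (m • (x * y) + (-(j:ℚ)/2) • (x * y))
      = (B (j+1) * (k • x)) * y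
        + x * (B (j+1) * ((m - k) • y + (-(j:ℚ)/2) • y)) := by
    intro m k x y
    have hm : m • (B (j+1) * x * y) = k • (B (j+1) * x * y) + (m - k) • (B (j+1) * x * y) := by
      rw [← add_smul, show k + (m - k) = m by ring]
    simp only [mul_add, add_mul, mul_smul_comm, smul_mul_assoc, ← mul_assoc]
    rw [← hBc x, hm]
    abel
  have coreB3 : ∀ (m k : ℤ) (x y : R),
      B (j+1) * (m • (x * y) + (-(j:ℚ)/2) • (x * y))
      = (B (j+1) * (k • x + (-(j:ℚ)/2) • x)) * y
        + x * (B (j+1) * ((m - k) • y)) := by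
    intro m k x y
    have hm : m • (B (j+1) * x * y) = k • (B (j+1) * x * y) + (m - k) • (B (j+1) * x * y) := by
      rw [← add_smul, show k + (m - k) = m by ring]
    simp only [mul_add, add_mul, mul_smul_comm, smul_mul_assoc, ← mul_assoc]
    rw [← hBc x, hm]
    abel
  ext n
  · -- first component
    show B (j+1) * ((n + (j:ℤ) + 1) • conv u.1 v.1 (n + (j:ℤ) + 1))
      = conv (Ej B j u).1 v.1 n + conv u.1 (Ej B j v).1 n
    rw [conv_eq_sum' hEu1 hv1 n, conv_eq_sum' hu1 hEv1 n,
      conv_eq_sum' hu1 hv1 (n + (j:ℤ) + 1),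
      sum_shift (n - Av) (Au - (j:ℤ) - 1) ((j:ℤ)+1),
      show n - Av + ((j:ℤ)+1) = n + (j:ℤ) + 1 - Av by ring,
      show Au - (j:ℤ) - 1 + ((j:ℤ)+1) = Au by ring,
      show n - (Av - (j:ℤ) - 1) = n + (j:ℤ) + 1 - Av by ring,
      Finset.smul_sum, Finset.mul_sum, ← Finset.sum_add_distrib]
    refine Finset.sum_congr rfl fun k hk => ?_
    show B (j+1) * ((n + (j:ℤ) + 1) • (u.1 k * v.1 (n + (j:ℤ) + 1 - k)))
      = (Ej B j u).1 (k - ((j:ℤ)+1)) * v.1 (n - (k - ((j:ℤ)+1)))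
        + u.1 k * (Ej B j v).1 (n - k)
    show B (j+1) * ((n + (j:ℤ) + 1) • (u.1 k * v.1 (n + (j:ℤ) + 1 - k)))
      = (B (j+1) * ((k - ((j:ℤ)+1) + (j:ℤ) + 1) • u.1 (k - ((j:ℤ)+1) + (j:ℤ) + 1)))
          * v.1 (n - (k - ((j:ℤ)+1)))
        + u.1 k * (B (j+1) * ((n - k + (j:ℤ) + 1) • v.1 (n - k + (j:ℤ) + 1)))
    rw [show k - ((j:ℤ)+1) + (j:ℤ) + 1 = k by ring,
      show n - (k - ((j:ℤ)+1)) = n + (j:ℤ) + 1 - k by ring,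
      show n - k + (j:ℤ) + 1 = n + (j:ℤ) + 1 - k by ring]
    exact coreA (n + (j:ℤ) + 1) k _ _
  · -- second component
    show B (j+1) * ((n + (j:ℤ) + 1) •
        ((conv (fun k => σ (u.1 k)) v.2 + conv u.2 v.1) (n + (j:ℤ) + 1))
        + (-(j:ℚ)/2) • ((conv (fun k => σ (u.1 k)) v.2 + conv u.2 v.1) (n + (j:ℤ) + 1)))
      = (conv (fun k => σ ((Ej B j u).1 k)) v.2 n + conv (Ej B j u).2 v.1 n)
        + (conv (fun k => σ (u.1 k)) (Ej B j v).2 n + conv u.2 (Ej B j v).1 n)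
    rw [Pi.add_apply, smul_add, smul_add, add_add_add_comm, mul_add, add_add_add_comm]
    congr 1
    · -- σa ∗ d part
      rw [hσEu1, conv_eq_sum' hσEu1b hv2 n, conv_eq_sum' hσu1 hEv2 n,
        conv_eq_sum' hσu1 hv2 (n + (j:ℤ) + 1),
        sum_shift (n - Av) (Au - (j:ℤ) - 1) ((j:ℤ)+1),
        show n - Av + ((j:ℤ)+1) = n + (j:ℤ) + 1 - Av by ring,
        show Au - (j:ℤ) - 1 + ((j:ℤ)+1) = Au by ring,
        show n - (Av - (j:ℤ) - 1) = n + (j:ℤ) + 1 - Av by ring,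
        Finset.smul_sum, Finset.smul_sum, ← Finset.sum_add_distrib, Finset.mul_sum,
        ← Finset.sum_add_distrib]
      refine Finset.sum_congr rfl fun k hk => ?_
      show B (j+1) * ((n + (j:ℤ) + 1) • (σ (u.1 k) * v.2 (n + (j:ℤ) + 1 - k))
          + (-(j:ℚ)/2) • (σ (u.1 k) * v.2 (n + (j:ℤ) + 1 - k)))
        = B (j+1) * ((k - ((j:ℤ)+1) + (j:ℤ) + 1) • σ (u.1 (k - ((j:ℤ)+1) + (j:ℤ) + 1)))
            * v.2 (n - (k - ((j:ℤ)+1)))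
          + σ (u.1 k) * (B (j+1) * ((n - k + (j:ℤ) + 1) • v.2 (n - k + (j:ℤ) + 1)
            + (-(j:ℚ)/2) • v.2 (n - k + (j:ℤ) + 1)))
      rw [show k - ((j:ℤ)+1) + (j:ℤ) + 1 = k by ring,
        show n - (k - ((j:ℤ)+1)) = n + (j:ℤ) + 1 - k by ring,
        show n - k + (j:ℤ) + 1 = n + (j:ℤ) + 1 - k by ring]
      exact coreB2 (n + (j:ℤ) + 1) k _ _
    · -- b ∗ c part
      rw [conv_eq_sum' hEu2 hv1 n, conv_eq_sum' hu2 hEv1 n,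
        conv_eq_sum' hu2 hv1 (n + (j:ℤ) + 1),
        sum_shift (n - Av) (Au - (j:ℤ) - 1) ((j:ℤ)+1),
        show n - Av + ((j:ℤ)+1) = n + (j:ℤ) + 1 - Av by ring,
        show Au - (j:ℤ) - 1 + ((j:ℤ)+1) = Au by ring,
        show n - (Av - (j:ℤ) - 1) = n + (j:ℤ) + 1 - Av by ring,
        Finset.smul_sum, Finset.smul_sum, ← Finset.sum_add_distrib, Finset.mul_sum,
        ← Finset.sum_add_distrib]
      refine Finset.sum_congr rfl fun k hk => ?_
      show B (j+1) * ((n + (j:ℤ) + 1) • (u.2 k * v.1 (n + (j:ℤ) + 1 - k))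
          + (-(j:ℚ)/2) • (u.2 k * v.1 (n + (j:ℤ) + 1 - k)))
        = B (j+1) * ((k - ((j:ℤ)+1) + (j:ℤ) + 1) • u.2 (k - ((j:ℤ)+1) + (j:ℤ) + 1)
            + (-(j:ℚ)/2) • u.2 (k - ((j:ℤ)+1) + (j:ℤ) + 1)) * v.1 (n - (k - ((j:ℤ)+1)))
          + u.2 k * (B (j+1) * ((n - k + (j:ℤ) + 1) • v.1 (n - k + (j:ℤ) + 1)))
      rw [show k - ((j:ℤ)+1) + (j:ℤ) + 1 = k by ring,
        show n - (k - ((j:ℤ)+1)) = n + (j:ℤ) + 1 - k by ring,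
        show n - k + (j:ℤ) + 1 = n + (j:ℤ) + 1 - k by ring]
      exact coreB3 (n + (j:ℤ) + 1) k _ _

end EJM
end St6
namespace St6

variable {R : Type*} [Ring R] [Algebra ℚ R]

section KJM
variable (σ : R →+* R) (N : ℕ → R)

lemma Kj_mul (hσ : ∀ r : R, σ (σ r) = r)
    (hcomm : ∀ u v : R, σ u = u → u * v = v * u)
    (hanti : ∀ u v : R, σ u = -u → σ v = -v → u * v = -(v * u))
    (hN : ∀ j, σ (N j) = -(N j))
    (j : ℕ) {u v : SLS R} {w w' : ℤ} (hu : Wt u w) (hv : Wt v w') :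
    Kj N j (slsMul σ u v) = slsMul σ (Kj N j u) v + slsMul σ u (Kj N j v) := by
  have hNs : ∀ x : R, x * N (j+1) = N (j+1) * σ x := Nsoak σ N hσ hcomm hanti hN (j+1)
  have hNs' : ∀ x : R, σ x * N (j+1) = N (j+1) * x := Nsoak' σ N hσ hcomm hanti hN (j+1)
  set Au := max w 0 with hAu
  set Av := max w' 0 with hAv
  have hu1 : Bnd u.1 Au := hu.bnd1
  have hu2 : Bnd u.2 Au := hu.bnd2
  have hv1 : Bnd v.1 Av := hv.bnd1
  have hv2 : Bnd v.2 Av := hv.bnd2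
  have hσu1 : Bnd (fun k => σ (u.1 k)) Au := fun m hm => by
    show σ (u.1 m) = 0; rw [hu1 m hm, map_zero]
  have hKu1 : Bnd (Kj N j u).1 (Au - (j:ℤ)) := fun m hm => by
    show N (j+1) * u.2 (m + (j:ℤ)) = 0
    rw [hu2 _ (by omega)]; simp
  have hKu2 : Bnd (Kj N j u).2 (Au - (j:ℤ) - 1) := fun m hm => by
    show N (j+1) * ((m + (j:ℤ) + 1) • u.1 (m + (j:ℤ) + 1)) = 0
    rw [hu1 _ (by omega)]; simp
  have hKv1 : Bnd (Kj N j v).1 (Av - (j:ℤ)) := fun m hm => by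
    show N (j+1) * v.2 (m + (j:ℤ)) = 0
    rw [hv2 _ (by omega)]; simp
  have hKv2 : Bnd (Kj N j v).2 (Av - (j:ℤ) - 1) := fun m hm => by
    show N (j+1) * ((m + (j:ℤ) + 1) • v.1 (m + (j:ℤ) + 1)) = 0
    rw [hv1 _ (by omega)]; simp
  have hσKu1 : (fun k => σ ((Kj N j u).1 k))
      = fun k => -(N (j+1) * σ (u.2 (k + (j:ℤ)))) := by
    funext k
    show σ (N (j+1) * u.2 (k + (j:ℤ))) = _
    rw [map_mul, hN, neg_mul]
  have hσKu1b : Bnd (fun k => -(N (j+1) * σ (u.2 (k + (j:ℤ))))) (Au - (j:ℤ)) :=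
    fun m hm => by
      show -(N (j+1) * σ (u.2 (m + (j:ℤ)))) = 0
      rw [hu2 _ (by omega), map_zero, mul_zero, neg_zero]
  -- cores
  have coreN1 : ∀ x y : R, N (j+1) * (σ x * y) = x * (N (j+1) * y) := by
    intro x y
    rw [← mul_assoc, ← hNs, mul_assoc]
  have coreN2 : ∀ (m k : ℤ) (x y : R), N (j+1) * (m • (x * y))
      = (N (j+1) * (k • x)) * y + σ x * (N (j+1) * ((m - k) • y)) := by
    intro m k x y
    have hm : m • (N (j+1) * x * y)
        = k • (N (j+1) * x * y) + (m - k) • (N (j+1) * x * y) := by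
      rw [← add_smul, show k + (m - k) = m by ring]
    simp only [mul_smul_comm, smul_mul_assoc, ← mul_assoc]
    rw [hNs', hm]
  have coreN0 : ∀ x y : R, -(N (j+1) * σ x) * y + x * (N (j+1) * y) = 0 := by
    intro x y
    simp only [neg_mul, ← mul_assoc]
    rw [hNs]
    exact neg_add_cancel _
  ext n
  · -- first component
    show N (j+1) * ((conv (fun k => σ (u.1 k)) v.2 + conv u.2 v.1) (n + (j:ℤ)))
      = conv (Kj N j u).1 v.1 n + conv u.1 (Kj N j v).1 n
    rw [Pi.add_apply, mul_add, add_comm (N (j+1) * conv (fun k => σ (u.1 k)) v.2 (n + (j:ℤ)))]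
    congr 1
    · -- N * (b ∗ c) = conv (Kj u).1 v.1
      rw [conv_eq_sum' hKu1 hv1 n, conv_eq_sum' hu2 hv1 (n + (j:ℤ)),
        sum_shift (n - Av) (Au - (j:ℤ)) (j:ℤ),
        show n - Av + (j:ℤ) = n + (j:ℤ) - Av by ring,
        show Au - (j:ℤ) + (j:ℤ) = Au by ring, Finset.mul_sum]
      refine Finset.sum_congr rfl fun k hk => ?_
      show N (j+1) * (u.2 k * v.1 (n + (j:ℤ) - k))
        = N (j+1) * u.2 (k - (j:ℤ) + (j:ℤ)) * v.1 (n - (k - (j:ℤ)))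
      rw [show k - (j:ℤ) + (j:ℤ) = k by ring,
        show n - (k - (j:ℤ)) = n + (j:ℤ) - k by ring, mul_assoc]
    · -- N * (σa ∗ d) = conv u.1 (Kj v).1
      rw [conv_eq_sum' hu1 hKv1 n, conv_eq_sum' hσu1 hv2 (n + (j:ℤ)),
        show n - (Av - (j:ℤ)) = n + (j:ℤ) - Av by ring, Finset.mul_sum]
      refine Finset.sum_congr rfl fun k hk => ?_
      show N (j+1) * (σ (u.1 k) * v.2 (n + (j:ℤ) - k))
        = u.1 k * (N (j+1) * v.2 (n - k + (j:ℤ)))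
      rw [show n - k + (j:ℤ) = n + (j:ℤ) - k by ring, coreN1]
  · -- second component
    show N (j+1) * ((n + (j:ℤ) + 1) • conv u.1 v.1 (n + (j:ℤ) + 1))
      = (conv (fun k => σ ((Kj N j u).1 k)) v.2 n + conv (Kj N j u).2 v.1 n)
        + (conv (fun k => σ (u.1 k)) (Kj N j v).2 n + conv u.2 (Kj N j v).1 n)
    have rearr : (conv (fun k => σ ((Kj N j u).1 k)) v.2 n + conv (Kj N j u).2 v.1 n)
        + (conv (fun k => σ (u.1 k)) (Kj N j v).2 n + conv u.2 (Kj N j v).1 n)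
        = (conv (Kj N j u).2 v.1 n + conv (fun k => σ (u.1 k)) (Kj N j v).2 n)
          + (conv (fun k => σ ((Kj N j u).1 k)) v.2 n + conv u.2 (Kj N j v).1 n) := by
      abel
    rw [rearr]
    have cancel : conv (fun k => σ ((Kj N j u).1 k)) v.2 n + conv u.2 (Kj N j v).1 n = 0 := by
      rw [hσKu1, conv_eq_sum' hσKu1b hv2 n, conv_eq_sum' hu2 hKv1 n,
        sum_shift (n - Av) (Au - (j:ℤ)) (j:ℤ),
        show n - Av + (j:ℤ) = n + (j:ℤ) - Av by ring,
        show Au - (j:ℤ) + (j:ℤ) = Au by ring,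
        show n - (Av - (j:ℤ)) = n + (j:ℤ) - Av by ring,
        ← Finset.sum_add_distrib]
      refine Finset.sum_eq_zero fun k hk => ?_
      show -(N (j+1) * σ (u.2 (k - (j:ℤ) + (j:ℤ)))) * v.2 (n - (k - (j:ℤ)))
        + u.2 k * (N (j+1) * v.2 (n - k + (j:ℤ))) = 0
      rw [show k - (j:ℤ) + (j:ℤ) = k by ring,
        show n - (k - (j:ℤ)) = n + (j:ℤ) - k by ring,
        show n - k + (j:ℤ) = n + (j:ℤ) - k by ring]
      exact coreN0 _ _
    rw [cancel, add_zero]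
    rw [conv_eq_sum' hKu2 hv1 n, conv_eq_sum' hσu1 hKv2 n,
      conv_eq_sum' hu1 hv1 (n + (j:ℤ) + 1),
      sum_shift (n - Av) (Au - (j:ℤ) - 1) ((j:ℤ)+1),
      show n - Av + ((j:ℤ)+1) = n + (j:ℤ) + 1 - Av by ring,
      show Au - (j:ℤ) - 1 + ((j:ℤ)+1) = Au by ring,
      show n - (Av - (j:ℤ) - 1) = n + (j:ℤ) + 1 - Av by ring,
      Finset.smul_sum, Finset.mul_sum, ← Finset.sum_add_distrib]
    refine Finset.sum_congr rfl fun k hk => ?_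
    show N (j+1) * ((n + (j:ℤ) + 1) • (u.1 k * v.1 (n + (j:ℤ) + 1 - k)))
      = N (j+1) * ((k - ((j:ℤ)+1) + (j:ℤ) + 1) • u.1 (k - ((j:ℤ)+1) + (j:ℤ) + 1))
          * v.1 (n - (k - ((j:ℤ)+1)))
        + σ (u.1 k) * (N (j+1) * ((n - k + (j:ℤ) + 1) • v.1 (n - k + (j:ℤ) + 1)))
    rw [show k - ((j:ℤ)+1) + (j:ℤ) + 1 = k by ring,
      show n - (k - ((j:ℤ)+1)) = n + (j:ℤ) + 1 - k by ring,
      show n - k + (j:ℤ) + 1 = n + (j:ℤ) + 1 - k by ring]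
    exact coreN2 (n + (j:ℤ) + 1) k _ _

end KJM
end St6
namespace St6

variable {R : Type*} [Ring R] [Algebra ℚ R]

section ASM
variable (σ : R →+* R) (B N : ℕ → R)

lemma bnd_sigma (f : ℤ → R) (A : ℤ) (hf : Bnd f A) : Bnd (fun k => σ (f k)) A :=
  fun m hm => by show σ (f m) = 0; rw [hf m hm, map_zero]

lemma convT1c {u : SLS R} {w : ℤ} (hu : Wt u w) {c : ℤ → R} {Ac : ℤ} (hc : Bnd c Ac)
    (n : ℤ) {K : ℕ} (hK : w - 2*n + 2*Ac ≤ K) :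
    conv (slsTbar B N u).1 c n
      = ∑ j ∈ Finset.range K, (conv (Ej B j u).1 c n + conv (Kj N j u).1 c n) := by
  have hT1 : Bnd (slsTbar B N u).1 (max (w-1) 0) := (hu.tbar B N).bnd1
  rw [conv_eq_sum' hT1 hc n,
    Finset.sum_congr rfl (fun k hk => by
      rw [tbar_coeff1' B N hu k (K := K) (by
        rcases Finset.mem_Icc.1 hk with ⟨h1, _⟩; omega), Finset.sum_mul]),
    Finset.sum_comm]
  refine Finset.sum_congr rfl fun j _ => ?_
  rw [conv_eq_sum' ((hu.ej B j).bnd1) hc n, conv_eq_sum' ((hu.kj N j).bnd1) hc n,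
    ← Finset.sum_add_distrib]
  exact Finset.sum_congr rfl fun k _ => (add_mul _ _ _)

lemma convT2c {u : SLS R} {w : ℤ} (hu : Wt u w) {c : ℤ → R} {Ac : ℤ} (hc : Bnd c Ac)
    (n : ℤ) {K : ℕ} (hK : w - 2*n + 2*Ac ≤ K) :
    conv (slsTbar B N u).2 c n
      = ∑ j ∈ Finset.range K, (conv (Ej B j u).2 c n + conv (Kj N j u).2 c n) := by
  have hT2 : Bnd (slsTbar B N u).2 (max (w-1) 0) := (hu.tbar B N).bnd2
  rw [conv_eq_sum' hT2 hc n,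
    Finset.sum_congr rfl (fun k hk => by
      rw [tbar_coeff2' B N hu k (K := K) (by
        rcases Finset.mem_Icc.1 hk with ⟨h1, _⟩; omega), Finset.sum_mul]),
    Finset.sum_comm]
  refine Finset.sum_congr rfl fun j _ => ?_
  rw [conv_eq_sum' ((hu.ej B j).bnd2) hc n, conv_eq_sum' ((hu.kj N j).bnd2) hc n,
    ← Finset.sum_add_distrib]
  exact Finset.sum_congr rfl fun k _ => (add_mul _ _ _)

lemma convT3c {u : SLS R} {w : ℤ} (hu : Wt u w) {c : ℤ → R} {Ac : ℤ} (hc : Bnd c Ac)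
    (n : ℤ) {K : ℕ} (hK : w - 2*n + 2*Ac ≤ K) :
    conv (fun k => σ ((slsTbar B N u).1 k)) c n
      = ∑ j ∈ Finset.range K,
          (conv (fun k => σ ((Ej B j u).1 k)) c n + conv (fun k => σ ((Kj N j u).1 k)) c n) := by
  have hT1 : Bnd (fun k => σ ((slsTbar B N u).1 k)) (max (w-1) 0) :=
    bnd_sigma σ _ _ ((hu.tbar B N).bnd1)
  rw [conv_eq_sum' hT1 hc n,
    Finset.sum_congr rfl (fun k hk => by
      show σ ((slsTbar B N u).1 k) * c (n - k) = _
      rw [tbar_coeff1' B N hu k (K := K) (by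
        rcases Finset.mem_Icc.1 hk with ⟨h1, _⟩; omega), map_sum, Finset.sum_mul]),
    Finset.sum_comm]
  refine Finset.sum_congr rfl fun j _ => ?_
  rw [conv_eq_sum' (bnd_sigma σ _ _ ((hu.ej B j).bnd1)) hc n,
    conv_eq_sum' (bnd_sigma σ _ _ ((hu.kj N j).bnd1)) hc n, ← Finset.sum_add_distrib]
  exact Finset.sum_congr rfl fun k _ => by rw [map_add, add_mul]

lemma convcT1 {v : SLS R} {w' : ℤ} (hv : Wt v w') {a : ℤ → R} {Aa : ℤ} (ha : Bnd a Aa)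
    (n : ℤ) {K : ℕ} (hK : w' - 2*n + 2*Aa ≤ K) :
    conv a (slsTbar B N v).1 n
      = ∑ j ∈ Finset.range K, (conv a (Ej B j v).1 n + conv a (Kj N j v).1 n) := by
  have hT1 : Bnd (slsTbar B N v).1 (max (w'-1) 0) := (hv.tbar B N).bnd1
  rw [conv_eq_sum' ha hT1 n,
    Finset.sum_congr rfl (fun k hk => by
      rw [tbar_coeff1' B N hv (n - k) (K := K) (by
        rcases Finset.mem_Icc.1 hk with ⟨_, h2⟩; omega), Finset.mul_sum]),
    Finset.sum_comm]
  refine Finset.sum_congr rfl fun j _ => ?_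
  rw [conv_eq_sum' ha ((hv.ej B j).bnd1) n, conv_eq_sum' ha ((hv.kj N j).bnd1) n,
    ← Finset.sum_add_distrib]
  exact Finset.sum_congr rfl fun k _ => (mul_add _ _ _)

lemma convcT2 {v : SLS R} {w' : ℤ} (hv : Wt v w') {a : ℤ → R} {Aa : ℤ} (ha : Bnd a Aa)
    (n : ℤ) {K : ℕ} (hK : w' - 2*n + 2*Aa ≤ K) :
    conv a (slsTbar B N v).2 n
      = ∑ j ∈ Finset.range K, (conv a (Ej B j v).2 n + conv a (Kj N j v).2 n) := by
  have hT2 : Bnd (slsTbar B N v).2 (max (w'-1) 0) := (hv.tbar B N).bnd2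
  rw [conv_eq_sum' ha hT2 n,
    Finset.sum_congr rfl (fun k hk => by
      rw [tbar_coeff2' B N hv (n - k) (K := K) (by
        rcases Finset.mem_Icc.1 hk with ⟨_, h2⟩; omega), Finset.mul_sum]),
    Finset.sum_comm]
  refine Finset.sum_congr rfl fun j _ => ?_
  rw [conv_eq_sum' ha ((hv.ej B j).bnd2) n, conv_eq_sum' ha ((hv.kj N j).bnd2) n,
    ← Finset.sum_add_distrib]
  exact Finset.sum_congr rfl fun k _ => (mul_add _ _ _)

lemma tbar_mul (hσ : ∀ r : R, σ (σ r) = r)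
    (hcomm : ∀ u v : R, σ u = u → u * v = v * u)
    (hanti : ∀ u v : R, σ u = -u → σ v = -v → u * v = -(v * u))
    (hB : ∀ j, σ (B j) = B j) (hN : ∀ j, σ (N j) = -(N j))
    {u v : SLS R} {w w' : ℤ} (hu : Wt u w) (hv : Wt v w') :
    slsTbar B N (slsMul σ u v)
      = slsMul σ (slsTbar B N u) v + slsMul σ u (slsTbar B N v) := by
  have huv : Wt (slsMul σ u v) (w + w') := hu.mul σ hv
  set Au := max w 0 with hAu
  set Av := max w' 0 with hAv
  have hu1 : Bnd u.1 Au := hu.bnd1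
  have hu2 : Bnd u.2 Au := hu.bnd2
  have hv1 : Bnd v.1 Av := hv.bnd1
  have hv2 : Bnd v.2 Av := hv.bnd2
  have hσu1 : Bnd (fun k => σ (u.1 k)) Au := bnd_sigma σ _ _ hu1
  ext n
  · set K := ((w + w' - 2*n) ⊔ (w - 2*n + 2*Av) ⊔ (w' - 2*n + 2*Au)).toNat with hKdef
    have hK : (w + w' - 2*n) ⊔ (w - 2*n + 2*Av) ⊔ (w' - 2*n + 2*Au) ≤ (K : ℤ) :=
      Int.self_le_toNat _
    show (slsTbar B N (slsMul σ u v)).1 n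
      = conv (slsTbar B N u).1 v.1 n + conv u.1 (slsTbar B N v).1 n
    rw [tbar_coeff1' B N huv n (K := K) (by omega),
      convT1c B N hu hv1 n (K := K) (by omega),
      convcT1 B N hv hu1 n (K := K) (by omega),
      ← Finset.sum_add_distrib]
    refine Finset.sum_congr rfl fun j _ => ?_
    have hej := congrArg (fun z : SLS R => z.1 n) (Ej_mul σ B hcomm hB j hu hv)
    have hkj := congrArg (fun z : SLS R => z.1 n) (Kj_mul σ N hσ hcomm hanti hN j hu hv)
    rw [hej, hkj]
    show (conv (Ej B j u).1 v.1 n + conv u.1 (Ej B j v).1 n)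
        + (conv (Kj N j u).1 v.1 n + conv u.1 (Kj N j v).1 n) = _
    abel
  · set K := ((w + w' - 2*n) ⊔ (w - 2*n + 2*Av) ⊔ (w' - 2*n + 2*Au)).toNat with hKdef
    have hK : (w + w' - 2*n) ⊔ (w - 2*n + 2*Av) ⊔ (w' - 2*n + 2*Au) ≤ (K : ℤ) :=
      Int.self_le_toNat _
    show (slsTbar B N (slsMul σ u v)).2 n
      = (conv (fun k => σ ((slsTbar B N u).1 k)) v.2 n + conv (slsTbar B N u).2 v.1 n)
        + (conv (fun k => σ (u.1 k)) (slsTbar B N v).2 n + conv u.2 (slsTbar B N v).1 n)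
    rw [tbar_coeff2' B N huv n (K := K) (by omega),
      convT3c σ B N hu hv2 n (K := K) (by omega),
      convT2c B N hu hv1 n (K := K) (by omega),
      convcT2 B N hv hσu1 n (K := K) (by omega),
      convcT1 B N hv hu2 n (K := K) (by omega),
      ← Finset.sum_add_distrib, ← Finset.sum_add_distrib, ← Finset.sum_add_distrib]
    refine Finset.sum_congr rfl fun j _ => ?_
    have hej := congrArg (fun z : SLS R => z.2 n) (Ej_mul σ B hcomm hB j hu hv)
    have hkj := congrArg (fun z : SLS R => z.2 n) (Kj_mul σ N hσ hcomm hanti hN j hu hv)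
    rw [hej, hkj]
    show (conv (fun k => σ ((Ej B j u).1 k)) v.2 n + conv (Ej B j u).2 v.1 n
          + (conv (fun k => σ (u.1 k)) (Ej B j v).2 n + conv u.2 (Ej B j v).1 n))
        + (conv (fun k => σ ((Kj N j u).1 k)) v.2 n + conv (Kj N j u).2 v.1 n
          + (conv (fun k => σ (u.1 k)) (Kj N j v).2 n + conv u.2 (Kj N j v).1 n)) = _
    abel

end ASM
end St6
namespace St6

variable {R : Type*} [Ring R] [Algebra ℚ R]

section MALG
variable (σ : R →+* R)

lemma slsMul_zero_left (v : SLS R) : slsMul σ (0 : SLS R) v = 0 := by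
  have h0 : (fun k => σ ((0 : SLS R).1 k)) = (0 : ℤ → R) := by
    funext k; show σ 0 = 0; exact map_zero σ
  ext n
  · show conv (0 : ℤ → R) v.1 n = 0
    rw [conv_zero_left]; rfl
  · show conv (fun k => σ ((0 : SLS R).1 k)) v.2 n + conv (0 : ℤ → R) v.1 n = 0
    rw [h0, conv_zero_left, conv_zero_left]; simp

lemma slsMul_zero_right (u : SLS R) : slsMul σ u (0 : SLS R) = 0 := by
  ext n
  · show conv u.1 (0 : ℤ → R) n = 0
    rw [conv_zero_right]; rfl
  · show conv (fun k => σ (u.1 k)) (0 : ℤ → R) n + conv u.2 (0 : ℤ → R) n = 0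
    rw [conv_zero_right, conv_zero_right]; simp

lemma slsMul_add_left {u u' v : SLS R} {w w' : ℤ} (hu : Wt u w) (hu' : Wt u' w)
    (hv : Wt v w') :
    slsMul σ (u + u') v = slsMul σ u v + slsMul σ u' v := by
  have hσ1 : (fun k => σ ((u + u').1 k))
      = (fun k => σ (u.1 k)) + (fun k => σ (u'.1 k)) := by
    funext k; show σ (u.1 k + u'.1 k) = _; rw [map_add]; rfl
  ext n
  · show conv (u.1 + u'.1) v.1 n = conv u.1 v.1 n + conv u'.1 v.1 n
    exact conv_add_left hu.bnd1 hu'.bnd1 hv.bnd1 n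
  · show conv (fun k => σ ((u + u').1 k)) v.2 n + conv (u.2 + u'.2) v.1 n
      = (conv (fun k => σ (u.1 k)) v.2 n + conv u.2 v.1 n)
        + (conv (fun k => σ (u'.1 k)) v.2 n + conv u'.2 v.1 n)
    rw [hσ1, conv_add_left (bnd_sigma σ _ _ hu.bnd1) (bnd_sigma σ _ _ hu'.bnd1) hv.bnd2 n,
      conv_add_left hu.bnd2 hu'.bnd2 hv.bnd1 n]
    abel

lemma slsMul_add_right {u v v' : SLS R} {w w' : ℤ} (hu : Wt u w) (hv : Wt v w')
    (hv' : Wt v' w') :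
    slsMul σ u (v + v') = slsMul σ u v + slsMul σ u v' := by
  ext n
  · show conv u.1 (v.1 + v'.1) n = conv u.1 v.1 n + conv u.1 v'.1 n
    exact conv_add_right hu.bnd1 hv.bnd1 hv'.bnd1 n
  · show conv (fun k => σ (u.1 k)) (v.2 + v'.2) n + conv u.2 (v.1 + v'.1) n
      = (conv (fun k => σ (u.1 k)) v.2 n + conv u.2 v.1 n)
        + (conv (fun k => σ (u.1 k)) v'.2 n + conv u.2 v'.1 n)
    rw [conv_add_right (bnd_sigma σ _ _ hu.bnd1) hv.bnd2 hv'.bnd2 n,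
      conv_add_right hu.bnd2 hv.bnd1 hv'.bnd1 n]
    abel

lemma slsMul_smul_left (q : ℚ) {u v : SLS R} {w w' : ℤ} (hu : Wt u w) (hv : Wt v w') :
    slsMul σ (q • u) v = q • slsMul σ u v := by
  have hσ1 : (fun k => σ ((q • u).1 k)) = (fun k => q • σ (u.1 k)) := by
    funext k; show σ (q • u.1 k) = _; rw [sigma_qsmul]
  ext n
  · show conv (fun k => q • u.1 k) v.1 n = q • conv u.1 v.1 n
    exact conv_smul_left q hu.bnd1 hv.bnd1 n
  · show conv (fun k => σ ((q • u).1 k)) v.2 n + conv (fun k => q • u.2 k) v.1 n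
      = q • (conv (fun k => σ (u.1 k)) v.2 n + conv u.2 v.1 n)
    rw [hσ1, conv_smul_left q (bnd_sigma σ _ _ hu.bnd1) hv.bnd2 n,
      conv_smul_left q hu.bnd2 hv.bnd1 n, smul_add]

lemma slsMul_smul_right (q : ℚ) {u v : SLS R} {w w' : ℤ} (hu : Wt u w) (hv : Wt v w') :
    slsMul σ u (q • v) = q • slsMul σ u v := by
  ext n
  · show conv u.1 (fun k => q • v.1 k) n = q • conv u.1 v.1 n
    exact conv_smul_right q hu.bnd1 hv.bnd1 n
  · show conv (fun k => σ (u.1 k)) (fun k => q • v.2 k) n + conv u.2 (fun k => q • v.1 k) n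
      = q • (conv (fun k => σ (u.1 k)) v.2 n + conv u.2 v.1 n)
    rw [conv_smul_right q (bnd_sigma σ _ _ hu.bnd1) hv.bnd2 n,
      conv_smul_right q hu.bnd2 hv.bnd1 n, smul_add]

lemma slsMul_sum_left {ι : Type*} (s : Finset ι) (f : ι → SLS R) {v : SLS R} {w w' : ℤ}
    (hf : ∀ i ∈ s, Wt (f i) w) (hv : Wt v w') :
    slsMul σ (∑ i ∈ s, f i) v = ∑ i ∈ s, slsMul σ (f i) v := by
  classical
  induction s using Finset.induction with
  | empty => simp only [Finset.sum_empty]; exact slsMul_zero_left σ v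
  | @insert x s' hx ih =>
    rw [Finset.sum_insert hx, Finset.sum_insert hx,
      slsMul_add_left σ (hf x (Finset.mem_insert_self x s'))
        (Wt.sum fun i hi => hf i (Finset.mem_insert_of_mem hi)) hv,
      ih (fun i hi => hf i (Finset.mem_insert_of_mem hi))]

lemma slsMul_sum_right {ι : Type*} (s : Finset ι) (f : ι → SLS R) {u : SLS R} {w w' : ℤ}
    (hu : Wt u w) (hf : ∀ i ∈ s, Wt (f i) w') :
    slsMul σ u (∑ i ∈ s, f i) = ∑ i ∈ s, slsMul σ u (f i) := by
  classical
  induction s using Finset.induction with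
  | empty => simp only [Finset.sum_empty]; exact slsMul_zero_right σ u
  | @insert x s' hx ih =>
    rw [Finset.sum_insert hx, Finset.sum_insert hx,
      slsMul_add_right σ hu (hf x (Finset.mem_insert_self x s'))
        (Wt.sum fun i hi => hf i (Finset.mem_insert_of_mem hi)),
      ih (fun i hi => hf i (Finset.mem_insert_of_mem hi))]

end MALG
end St6
namespace St6

variable {R : Type*} [Ring R] [Algebra ℚ R]

lemma triangle_sum {M : Type*} [AddCommMonoid M] (K : ℕ) (f : ℕ → ℕ → M) :
    ∑ k ∈ Finset.range K, ∑ i ∈ Finset.range (k+1), f i (k - i)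
    = ∑ p ∈ (Finset.range K ×ˢ Finset.range K).filter (fun p => p.1 + p.2 < K),
        f p.1 p.2 := by
  rw [Finset.sum_sigma']
  refine Finset.sum_nbij' (fun s => (s.2, s.1 - s.2)) (fun p => ⟨p.1 + p.2, p.1⟩)
    ?_ ?_ ?_ ?_ ?_ <;>
    intros a ha <;>
    simp only [Finset.mem_sigma, Finset.mem_filter, Finset.mem_product,
      Finset.mem_range] at * <;>
    first
      | omega
      | (ext <;> simp <;> omega)
      | (congr 1; omega)

lemma fact_scalar (i k : ℕ) (h : i ≤ k) :
    (k.factorial : ℚ)⁻¹ * (k.choose i : ℚ)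
      = (i.factorial : ℚ)⁻¹ * ((k - i).factorial : ℚ)⁻¹ := by
  have h1 : (k.choose i) * i.factorial * (k - i).factorial = k.factorial :=
    Nat.choose_mul_factorial_mul_factorial h
  have h2 : ((k.choose i : ℚ)) * (i.factorial : ℚ) * ((k - i).factorial : ℚ)
      = (k.factorial : ℚ) := by exact_mod_cast congrArg (Nat.cast : ℕ → ℚ) h1
  have f1 : (i.factorial : ℚ) ≠ 0 := Nat.cast_ne_zero.2 i.factorial_ne_zero
  have f2 : ((k - i).factorial : ℚ) ≠ 0 := Nat.cast_ne_zero.2 (k - i).factorial_ne_zero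
  have f3 : (k.factorial : ℚ) ≠ 0 := Nat.cast_ne_zero.2 k.factorial_ne_zero
  field_simp
  linear_combination h2

section LEIB
variable (σ : R →+* R) (B N : ℕ → R)
variable (hσ : ∀ r : R, σ (σ r) = r)
  (hcomm : ∀ u v : R, σ u = u → u * v = v * u)
  (hanti : ∀ u v : R, σ u = -u → σ v = -v → u * v = -(v * u))
  (hB : ∀ j, σ (B j) = B j) (hN : ∀ j, σ (N j) = -(N j))

include hσ hcomm hanti hB hN in
lemma tbar_iter_mul {u v : SLS R} {w w' : ℤ} (hu : Wt u w) (hv : Wt v w') (k : ℕ) :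
    (slsTbar B N)^[k] (slsMul σ u v)
      = ∑ i ∈ Finset.range (k+1), ((k.choose i : ℚ))
          • slsMul σ ((slsTbar B N)^[i] u) ((slsTbar B N)^[k-i] v) := by
  have hwP : ∀ i j : ℕ, Wt (slsMul σ ((slsTbar B N)^[i] u) ((slsTbar B N)^[j] v))
      ((w - i) + (w' - j)) :=
    fun i j => (hu.tbar_iter B N i).mul σ (hv.tbar_iter B N j)
  induction k with
  | zero => simp
  | succ k ih =>
    have hterm : ∀ i ∈ Finset.range (k+1),
        Wt (((k.choose i : ℚ))
          • slsMul σ ((slsTbar B N)^[i] u) ((slsTbar B N)^[k-i] v)) (w + w' - k) := by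
      intro i hi
      have hik : i ≤ k := by
        have := Finset.mem_range.1 hi; omega
      refine ((hwP i (k-i)).mono ?_).smul _
      have hcast : ((k - i : ℕ) : ℤ) = (k : ℤ) - (i : ℤ) := by omega
      omega
    rw [Function.iterate_succ_apply', ih,
      tbar_sum B N _ _ hterm]
    have step : ∀ i ∈ Finset.range (k+1),
        slsTbar B N (((k.choose i : ℚ))
            • slsMul σ ((slsTbar B N)^[i] u) ((slsTbar B N)^[k-i] v))
          = ((k.choose i : ℚ)) • (slsMul σ ((slsTbar B N)^[i+1] u) ((slsTbar B N)^[k-i] v)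
              + slsMul σ ((slsTbar B N)^[i] u) ((slsTbar B N)^[k-i+1] v)) := by
      intro i hi
      rw [tbar_smul B N _ (hwP i (k-i)),
        tbar_mul σ B N hσ hcomm hanti hB hN (hu.tbar_iter B N i) (hv.tbar_iter B N (k-i)),
        Function.iterate_succ_apply', Function.iterate_succ_apply']
    rw [Finset.sum_congr rfl step]
    -- now the Pascal recombination
    have hg : ∀ i, i ≤ k + 1 →
        slsMul σ ((slsTbar B N)^[i] u) ((slsTbar B N)^[k+1-i] v)
          = slsMul σ ((slsTbar B N)^[i] u) ((slsTbar B N)^[k+1-i] v) := fun _ _ => rfl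
    simp only [smul_add, Finset.sum_add_distrib]
    rw [Finset.sum_range_succ' (fun i => ((k+1).choose i : ℚ)
      • slsMul σ ((slsTbar B N)^[i] u) ((slsTbar B N)^[k+1-i] v)) (k+1)]
    have e1 : ∀ i ∈ Finset.range (k+1),
        ((k.choose i : ℚ)) • slsMul σ ((slsTbar B N)^[i+1] u) ((slsTbar B N)^[k-i] v)
        = ((k.choose i : ℚ)) • slsMul σ ((slsTbar B N)^[i+1] u) ((slsTbar B N)^[k+1-(i+1)] v) := by
      intro i hi
      have : k - i = k + 1 - (i + 1) := by omega
      rw [this]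
    have e2 : ∀ i ∈ Finset.range (k+1),
        ((k.choose i : ℚ)) • slsMul σ ((slsTbar B N)^[i] u) ((slsTbar B N)^[k-i+1] v)
        = ((k.choose i : ℚ)) • slsMul σ ((slsTbar B N)^[i] u) ((slsTbar B N)^[k+1-i] v) := by
      intro i hi
      have hik : i ≤ k := by have := Finset.mem_range.1 hi; omega
      have : k - i + 1 = k + 1 - i := by omega
      rw [this]
    rw [Finset.sum_congr rfl e1, Finset.sum_congr rfl e2]
    have e3 : ∀ i ∈ Finset.range (k+1),
        (((k+1).choose (i+1) : ℚ))
            • slsMul σ ((slsTbar B N)^[i+1] u) ((slsTbar B N)^[k+1-(i+1)] v)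
        = ((k.choose i : ℚ))
            • slsMul σ ((slsTbar B N)^[i+1] u) ((slsTbar B N)^[k+1-(i+1)] v)
          + ((k.choose (i+1) : ℚ))
            • slsMul σ ((slsTbar B N)^[i+1] u) ((slsTbar B N)^[k+1-(i+1)] v) := by
      intro i hi
      rw [← add_smul]
      congr 1
      rw [Nat.choose_succ_succ]
      push_cast
      ring
    rw [Finset.sum_congr rfl e3, Finset.sum_add_distrib]
    have e4 : ∑ i ∈ Finset.range (k+1), ((k.choose (i+1) : ℚ))
          • slsMul σ ((slsTbar B N)^[i+1] u) ((slsTbar B N)^[k+1-(i+1)] v)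
        = ∑ i ∈ Finset.range (k+1), ((k.choose i : ℚ))
          • slsMul σ ((slsTbar B N)^[i] u) ((slsTbar B N)^[k+1-i] v)
          - ((k.choose 0 : ℚ))
          • slsMul σ ((slsTbar B N)^[0] u) ((slsTbar B N)^[k+1-0] v) := by
      rw [eq_sub_iff_add_eq,
        ← Finset.sum_range_succ' (fun i => ((k.choose i : ℚ))
          • slsMul σ ((slsTbar B N)^[i] u) ((slsTbar B N)^[k+1-i] v)) (k+1),
        Finset.sum_range_succ]
      simp [Nat.choose_succ_self]
    rw [e4]
    have e5 : (((k+1).choose 0 : ℚ))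
          • slsMul σ ((slsTbar B N)^[0] u) ((slsTbar B N)^[k+1-0] v)
        = ((k.choose 0 : ℚ))
          • slsMul σ ((slsTbar B N)^[0] u) ((slsTbar B N)^[k+1-0] v) := by
      norm_num
    rw [e5]
    abel

end LEIB
end St6
namespace St6

variable {R : Type*} [Ring R] [Algebra ℚ R]

section EXPMUL
variable (σ : R →+* R) (B N : ℕ → R)
variable (hσ : ∀ r : R, σ (σ r) = r)
  (hcomm : ∀ u v : R, σ u = u → u * v = v * u)
  (hanti : ∀ u v : R, σ u = -u → σ v = -v → u * v = -(v * u))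
  (hB : ∀ j, σ (B j) = B j) (hN : ∀ j, σ (N j) = -(N j))

include hσ hcomm hanti hB hN in
lemma exp_mul {u v : SLS R} {w w' : ℤ} (hu : Wt u w) (hv : Wt v w') :
    slsExpBar B N (slsMul σ u v)
      = slsMul σ (slsExpBar B N u) (slsExpBar B N v) := by
  have huv : Wt (slsMul σ u v) (w + w') := hu.mul σ hv
  have hP : ∀ i j : ℕ, Wt (slsMul σ ((slsTbar B N)^[i] u) ((slsTbar B N)^[j] v))
      (w + w' - i - j) :=
    fun i j => ((hu.tbar_iter B N i).mul σ (hv.tbar_iter B N j)).mono (by omega)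
  have sq : ∀ K : ℕ, slsMul σ (Sexp B N K u) (Sexp B N K v)
      = ∑ p ∈ Finset.range K ×ˢ Finset.range K,
          ((p.1.factorial : ℚ)⁻¹ * (p.2.factorial : ℚ)⁻¹)
            • slsMul σ ((slsTbar B N)^[p.1] u) ((slsTbar B N)^[p.2] v) := by
    intro K
    rw [show Sexp B N K u = ∑ k ∈ Finset.range K,
        (k.factorial : ℚ)⁻¹ • (slsTbar B N)^[k] u from rfl,
      slsMul_sum_left σ _ _
        (fun i _ => (((hu.tbar_iter B N i).mono (by omega)).smul _ : Wt _ w))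
        (hv.sexp B N K),
      Finset.sum_product]
    refine Finset.sum_congr rfl fun i _ => ?_
    rw [slsMul_smul_left σ _ (hu.tbar_iter B N i) (hv.sexp B N K),
      show Sexp B N K v = ∑ k ∈ Finset.range K,
        (k.factorial : ℚ)⁻¹ • (slsTbar B N)^[k] v from rfl,
      slsMul_sum_right σ _ _ (hu.tbar_iter B N i)
        (fun j _ => (((hv.tbar_iter B N j).mono (by omega)).smul _ : Wt _ w')),
      Finset.smul_sum]
    refine Finset.sum_congr rfl fun j _ => ?_
    rw [slsMul_smul_right σ _ (hu.tbar_iter B N i) (hv.tbar_iter B N j), smul_smul]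
  have tri : ∀ K : ℕ, Sexp B N K (slsMul σ u v)
      = ∑ p ∈ (Finset.range K ×ˢ Finset.range K).filter (fun p => p.1 + p.2 < K),
          ((p.1.factorial : ℚ)⁻¹ * (p.2.factorial : ℚ)⁻¹)
            • slsMul σ ((slsTbar B N)^[p.1] u) ((slsTbar B N)^[p.2] v) := by
    intro K
    rw [show Sexp B N K (slsMul σ u v) = ∑ k ∈ Finset.range K,
        (k.factorial : ℚ)⁻¹ • (slsTbar B N)^[k] (slsMul σ u v) from rfl,
      Finset.sum_congr rfl (fun k _ => by
        rw [tbar_iter_mul σ B N hσ hcomm hanti hB hN hu hv k, Finset.smul_sum]),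
      Finset.sum_congr rfl (fun k _ => Finset.sum_congr rfl (fun i hi => by
        rw [smul_smul, fact_scalar i k (by
          have := Finset.mem_range.1 hi; omega)]))]
    exact triangle_sum K fun i j => ((i.factorial : ℚ)⁻¹ * (j.factorial : ℚ)⁻¹)
      • slsMul σ ((slsTbar B N)^[i] u) ((slsTbar B N)^[j] v)
  have rest : ∀ K : ℕ, Wt (∑ p ∈ (Finset.range K ×ˢ Finset.range K).filter
        (fun p => ¬ p.1 + p.2 < K),
        ((p.1.factorial : ℚ)⁻¹ * (p.2.factorial : ℚ)⁻¹)
          • slsMul σ ((slsTbar B N)^[p.1] u) ((slsTbar B N)^[p.2] v)) (w + w' - K) := by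
    intro K
    refine Wt.sum fun p hp => ?_
    have hmem := Finset.mem_filter.1 hp
    have hge : K ≤ p.1 + p.2 := not_lt.1 hmem.2
    exact ((hP p.1 p.2).mono (by omega)).smul _
  ext n
  · set K := (w + w' - 2*n).toNat + 1 with hKdef
    have hK : w + w' - 2*n < (K : ℤ) := by
      have := Int.self_le_toNat (w + w' - 2*n)
      push_cast
      omega
    set Du := slsExpBar B N u - Sexp B N K u with hDu
    set Dv := slsExpBar B N v - Sexp B N K v with hDv
    have wDu' : Wt Du (w - K) := exp_sub_sexp B N hu K
    have wDv' : Wt Dv (w' - K) := exp_sub_sexp B N hv K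
    have wSu : Wt (Sexp B N K u) w := hu.sexp B N K
    have wSv : Wt (Sexp B N K v) w' := hv.sexp B N K
    have wDu : Wt Du w := wDu'.mono (by omega)
    have wDv : Wt Dv w' := wDv'.mono (by omega)
    have hu'' : slsExpBar B N u = Sexp B N K u + Du := by rw [hDu]; abel
    have hv'' : slsExpBar B N v = Sexp B N K v + Dv := by rw [hDv]; abel
    have hsq : (slsMul σ (slsExpBar B N u) (slsExpBar B N v)).1 n
        = (slsMul σ (Sexp B N K u) (Sexp B N K v)).1 n := by
      rw [hu'', hv'', slsMul_add_left σ wSu wDu (wSv.add wDv),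
        slsMul_add_right σ wSu wSv wDv, slsMul_add_right σ wDu wSv wDv]
      have z1 : (slsMul σ (Sexp B N K u) Dv).1 n = 0 :=
        (wSu.mul σ wDv').1 n (by omega)
      have z2 : (slsMul σ Du (Sexp B N K v)).1 n = 0 :=
        (wDu'.mul σ wSv).1 n (by omega)
      have z3 : (slsMul σ Du Dv).1 n = 0 :=
        (wDu'.mul σ wDv').1 n (by omega)
      show (slsMul σ (Sexp B N K u) (Sexp B N K v)).1 n + (slsMul σ (Sexp B N K u) Dv).1 n
        + ((slsMul σ Du (Sexp B N K v)).1 n + (slsMul σ Du Dv).1 n) = _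
      rw [z1, z2, z3, add_zero, add_zero, add_zero]
    have hsq2 : (slsMul σ (Sexp B N K u) (Sexp B N K v)).1 n
        = (Sexp B N K (slsMul σ u v)).1 n := by
      rw [sq K, tri K,
        ← Finset.sum_filter_add_sum_filter_not (Finset.range K ×ˢ Finset.range K)
          (fun p => p.1 + p.2 < K)]
      show (_ + _ : SLS R).1 n = _
      rw [show ((∑ p ∈ (Finset.range K ×ˢ Finset.range K).filter (fun p => p.1 + p.2 < K),
          ((p.1.factorial : ℚ)⁻¹ * (p.2.factorial : ℚ)⁻¹)
            • slsMul σ ((slsTbar B N)^[p.1] u) ((slsTbar B N)^[p.2] v))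
          + (∑ p ∈ (Finset.range K ×ˢ Finset.range K).filter (fun p => ¬ p.1 + p.2 < K),
          ((p.1.factorial : ℚ)⁻¹ * (p.2.factorial : ℚ)⁻¹)
            • slsMul σ ((slsTbar B N)^[p.1] u) ((slsTbar B N)^[p.2] v)) : SLS R).1 n
        = (∑ p ∈ (Finset.range K ×ˢ Finset.range K).filter (fun p => p.1 + p.2 < K),
          ((p.1.factorial : ℚ)⁻¹ * (p.2.factorial : ℚ)⁻¹)
            • slsMul σ ((slsTbar B N)^[p.1] u) ((slsTbar B N)^[p.2] v)).1 n
          + (∑ p ∈ (Finset.range K ×ˢ Finset.range K).filter (fun p => ¬ p.1 + p.2 < K),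
          ((p.1.factorial : ℚ)⁻¹ * (p.2.factorial : ℚ)⁻¹)
            • slsMul σ ((slsTbar B N)^[p.1] u) ((slsTbar B N)^[p.2] v)).1 n from rfl,
        (rest K).1 n (by omega), add_zero]
    rw [exp_coeff1 B N huv n (K := K) (by omega), ← Sexp_coeff1, hsq, hsq2]
  · set K := (w + w' - 2*n).toNat + 1 with hKdef
    have hK : w + w' - 2*n < (K : ℤ) := by
      have := Int.self_le_toNat (w + w' - 2*n)
      push_cast
      omega
    set Du := slsExpBar B N u - Sexp B N K u with hDu
    set Dv := slsExpBar B N v - Sexp B N K v with hDv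
    have wDu' : Wt Du (w - K) := exp_sub_sexp B N hu K
    have wDv' : Wt Dv (w' - K) := exp_sub_sexp B N hv K
    have wSu : Wt (Sexp B N K u) w := hu.sexp B N K
    have wSv : Wt (Sexp B N K v) w' := hv.sexp B N K
    have wDu : Wt Du w := wDu'.mono (by omega)
    have wDv : Wt Dv w' := wDv'.mono (by omega)
    have hu'' : slsExpBar B N u = Sexp B N K u + Du := by rw [hDu]; abel
    have hv'' : slsExpBar B N v = Sexp B N K v + Dv := by rw [hDv]; abel
    have hsq : (slsMul σ (slsExpBar B N u) (slsExpBar B N v)).2 n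
        = (slsMul σ (Sexp B N K u) (Sexp B N K v)).2 n := by
      rw [hu'', hv'', slsMul_add_left σ wSu wDu (wSv.add wDv),
        slsMul_add_right σ wSu wSv wDv, slsMul_add_right σ wDu wSv wDv]
      have z1 : (slsMul σ (Sexp B N K u) Dv).2 n = 0 :=
        (wSu.mul σ wDv').2 n (by omega)
      have z2 : (slsMul σ Du (Sexp B N K v)).2 n = 0 :=
        (wDu'.mul σ wSv).2 n (by omega)
      have z3 : (slsMul σ Du Dv).2 n = 0 :=
        (wDu'.mul σ wDv').2 n (by omega)
      show (slsMul σ (Sexp B N K u) (Sexp B N K v)).2 n + (slsMul σ (Sexp B N K u) Dv).2 n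
        + ((slsMul σ Du (Sexp B N K v)).2 n + (slsMul σ Du Dv).2 n) = _
      rw [z1, z2, z3, add_zero, add_zero, add_zero]
    have hsq2 : (slsMul σ (Sexp B N K u) (Sexp B N K v)).2 n
        = (Sexp B N K (slsMul σ u v)).2 n := by
      rw [sq K, tri K,
        ← Finset.sum_filter_add_sum_filter_not (Finset.range K ×ˢ Finset.range K)
          (fun p => p.1 + p.2 < K)]
      show (_ + _ : SLS R).2 n = _
      rw [show ((∑ p ∈ (Finset.range K ×ˢ Finset.range K).filter (fun p => p.1 + p.2 < K),
          ((p.1.factorial : ℚ)⁻¹ * (p.2.factorial : ℚ)⁻¹)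
            • slsMul σ ((slsTbar B N)^[p.1] u) ((slsTbar B N)^[p.2] v))
          + (∑ p ∈ (Finset.range K ×ˢ Finset.range K).filter (fun p => ¬ p.1 + p.2 < K),
          ((p.1.factorial : ℚ)⁻¹ * (p.2.factorial : ℚ)⁻¹)
            • slsMul σ ((slsTbar B N)^[p.1] u) ((slsTbar B N)^[p.2] v)) : SLS R).2 n
        = (∑ p ∈ (Finset.range K ×ˢ Finset.range K).filter (fun p => p.1 + p.2 < K),
          ((p.1.factorial : ℚ)⁻¹ * (p.2.factorial : ℚ)⁻¹)
            • slsMul σ ((slsTbar B N)^[p.1] u) ((slsTbar B N)^[p.2] v)).2 n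
          + (∑ p ∈ (Finset.range K ×ˢ Finset.range K).filter (fun p => ¬ p.1 + p.2 < K),
          ((p.1.factorial : ℚ)⁻¹ * (p.2.factorial : ℚ)⁻¹)
            • slsMul σ ((slsTbar B N)^[p.1] u) ((slsTbar B N)^[p.2] v)).2 n from rfl,
        (rest K).2 n (by omega), add_zero]
    rw [exp_coeff2 B N huv n (K := K) (by omega), ← Sexp_coeff2, hsq, hsq2]

end EXPMUL
end St6
namespace St6

variable {R : Type*} [Ring R] [Algebra ℚ R]

lemma coefsum1 {ι : Type*} (s : Finset ι) (g : ι → SLS R) (p : ℤ) :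
    (∑ m ∈ s, g m).1 p = ∑ m ∈ s, (g m).1 p := by
  rw [Prod.fst_sum, Finset.sum_apply]

lemma coefsum2 {ι : Type*} (s : Finset ι) (g : ι → SLS R) (p : ℤ) :
    (∑ m ∈ s, g m).2 p = ∑ m ∈ s, (g m).2 p := by
  rw [Prod.snd_sum, Finset.sum_apply]

section MONO
variable (σ : R →+* R) (B N : ℕ → R)

lemma slsMul_Ee (i j : ℤ) : slsMul σ (Ee i) (Ee j) = (Ee (i + j) : SLS R) := by
  ext n
  · show conv (dl i) (dl j) n = dl (i + j) n
    rw [conv_dl_left]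
    show (if n - i = j then (1:R) else 0) = (if n = i + j then (1:R) else 0)
    by_cases h : n = i + j
    · rw [if_pos (by omega), if_pos h]
    · rw [if_neg (by omega), if_neg h]
  · show conv (fun k => σ ((Ee i : SLS R).1 k)) (0 : ℤ → R) n
        + conv (0 : ℤ → R) (dl j) n = 0
    rw [conv_zero_right, conv_zero_left]
    simp

lemma tbar_one : slsTbar B N (slsOne : SLS R) = 0 := by
  ext n
  · show (∑ᶠ j : ℕ, _ : R) = (0 : SLS R).1 n
    rw [show ((0 : SLS R)).1 n = 0 from rfl]
    refine finsum_eq_zero_of_forall_eq_zero fun j => ?_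
    show B (j+1) * ((n + (j:ℤ) + 1) • (slsOne : SLS R).1 (n + (j:ℤ) + 1))
      + N (j+1) * (slsOne : SLS R).2 (n + (j:ℤ)) = 0
    rcases eq_or_ne (n + (j:ℤ) + 1) 0 with h | h
    · rw [h]
      show B (j+1) * ((0:ℤ) • _) + N (j+1) * (0:R) = 0
      simp
    · have : (slsOne : SLS R).1 (n + (j:ℤ) + 1) = 0 := by
        show (if n + (j:ℤ) + 1 = 0 then (1:R) else 0) = 0
        simp [h]
      rw [this]
      show B (j+1) * ((n + (j:ℤ) + 1) • (0:R)) + N (j+1) * (0:R) = 0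
      simp
  · show (∑ᶠ j : ℕ, _ : R) = (0 : SLS R).2 n
    rw [show ((0 : SLS R)).2 n = 0 from rfl]
    refine finsum_eq_zero_of_forall_eq_zero fun j => ?_
    show B (j+1) * ((n + (j:ℤ) + 1) • (slsOne : SLS R).2 (n + (j:ℤ) + 1)
        + (-(j:ℚ)/2) • (slsOne : SLS R).2 (n + (j:ℤ) + 1))
      + N (j+1) * ((n + (j:ℤ) + 1) • (slsOne : SLS R).1 (n + (j:ℤ) + 1)) = 0
    rcases eq_or_ne (n + (j:ℤ) + 1) 0 with h | h
    · rw [h]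
      show B (j+1) * ((0:ℤ) • (0:R) + (-(j:ℚ)/2) • (0:R)) + N (j+1) * ((0:ℤ) • _) = 0
      simp
    · have h1 : (slsOne : SLS R).1 (n + (j:ℤ) + 1) = 0 := by
        show (if n + (j:ℤ) + 1 = 0 then (1:R) else 0) = 0
        simp [h]
      rw [h1]
      show B (j+1) * ((n + (j:ℤ) + 1) • (0:R) + (-(j:ℚ)/2) • (0:R))
        + N (j+1) * ((n + (j:ℤ) + 1) • (0:R)) = 0
      simp

lemma exp_one : slsExpBar B N (slsOne : SLS R) = slsOne := by
  have h1 : ∀ k, 1 ≤ k → (slsTbar B N)^[k] (slsOne : SLS R) = 0 := by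
    intro k hk
    obtain ⟨m, rfl⟩ := Nat.exists_eq_add_of_le hk
    rw [add_comm, Function.iterate_add_apply, Function.iterate_one, tbar_one,
      tbar_iter_zero]
  ext n
  · show (∑ᶠ k : ℕ, (k.factorial : ℚ)⁻¹ • ((slsTbar B N)^[k] (slsOne : SLS R)).1 n) = _
    rw [finsum_eq_single _ 0 (fun k hk => by
      rw [h1 k (Nat.one_le_iff_ne_zero.2 hk)]
      show _ • ((0 : SLS R)).1 n = 0
      simp)]
    show (Nat.factorial 0 : ℚ)⁻¹ • (slsOne : SLS R).1 n = _
    simp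
  · show (∑ᶠ k : ℕ, (k.factorial : ℚ)⁻¹ • ((slsTbar B N)^[k] (slsOne : SLS R)).2 n) = _
    rw [finsum_eq_single _ 0 (fun k hk => by
      rw [h1 k (Nat.one_le_iff_ne_zero.2 hk)]
      show _ • ((0 : SLS R)).2 n = 0
      simp)]
    show (Nat.factorial 0 : ℚ)⁻¹ • (slsOne : SLS R).2 n = _
    simp

variable (hσ : ∀ r : R, σ (σ r) = r)
  (hcomm : ∀ u v : R, σ u = u → u * v = v * u)
  (hanti : ∀ u v : R, σ u = -u → σ v = -v → u * v = -(v * u))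
  (hB : ∀ j, σ (B j) = B j) (hN : ∀ j, σ (N j) = -(N j))

include hσ hcomm hanti hB hN in
lemma pow_exp (e : ℤ) (k : ℕ) :
    slsPow σ (slsExpBar B N (Ee e)) k = slsExpBar B N (Ee ((k : ℤ) * e)) := by
  induction k with
  | zero =>
    show slsOne = _
    rw [show ((0:ℕ) : ℤ) * e = 0 by ring, ← slsOne_eq, exp_one]
  | succ k ih =>
    show slsMul σ (slsExpBar B N (Ee e)) (slsPow σ (slsExpBar B N (Ee e)) k) = _
    rw [ih, ← exp_mul σ B N hσ hcomm hanti hB hN (wt_Ee e) (wt_Ee ((k:ℤ) * e)),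
      slsMul_Ee, show e + (k:ℤ) * e = ((k:ℕ)+1 : ℤ) * e by ring]
    norm_cast

include hσ hcomm hanti hB hN in
lemma zpow_exp (m : ℤ) :
    slsZPow σ (slsExpBar B N (Ee 1)) (slsExpBar B N (Ee (-1))) m
      = slsExpBar B N (Ee m) := by
  rw [slsZPow]
  rcases le_or_gt 0 m with h | h
  · rw [if_pos h, pow_exp σ B N hσ hcomm hanti hB hN 1 m.toNat,
      show (m.toNat : ℤ) * 1 = m by omega]
  · rw [if_neg (by omega), pow_exp σ B N hσ hcomm hanti hB hN (-1) (-m).toNat,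
      show ((-m).toNat : ℤ) * (-1) = m by omega]

include hσ hcomm hanti hB hN in
lemma subst_line (a : ℤ → R) (A₀ : ℤ) (ha : Bnd a A₀) :
    slsSumZ (fun m => slsSmulL σ (a m) (slsExpBar B N (Ee m)))
      = slsExpBar B N ((a, 0) : SLS R) := by
  have key : ∀ s : Finset ℤ, (∀ m ∈ s, m ≤ A₀) →
      ∑ m ∈ s, slsSmulL σ (a m) (slsExpBar B N (Ee m))
        = slsExpBar B N (∑ m ∈ s, slsSmulL σ (a m) (Ee m)) := by
    intro s hs
    rw [exp_sum B N s _ (fun m hm =>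
      (((wt_Ee m).smulL σ (a m)).mono (by
        have := hs m hm
        simp only [le_sup_iff]
        left; omega) : Wt _ (2*A₀ ⊔ 0)))]
    exact Finset.sum_congr rfl fun m _ =>
      (exp_smulL B N σ hσ hcomm hanti hB hN (a m) (wt_Ee m)).symm
  have vanish1 : ∀ (n : ℤ) (m : ℤ), m ∉ Finset.Icc n A₀ →
      (slsSmulL σ (a m) (slsExpBar B N (Ee m))).1 n = 0 := by
    intro n m hm
    show a m * (slsExpBar B N (Ee m)).1 n = 0
    rw [Finset.mem_Icc, not_and_or] at hm
    rcases hm with hm | hm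
    · rw [((wt_Ee m).exp B N).1 n (by omega), mul_zero]
    · rw [ha m (by omega), zero_mul]
  have vanish2 : ∀ (n : ℤ) (m : ℤ), m ∉ Finset.Icc n A₀ →
      (slsSmulL σ (a m) (slsExpBar B N (Ee m))).2 n = 0 := by
    intro n m hm
    show σ (a m) * (slsExpBar B N (Ee m)).2 n = 0
    rw [Finset.mem_Icc, not_and_or] at hm
    rcases hm with hm | hm
    · rw [((wt_Ee m).exp B N).2 n (by omega), mul_zero]
    · rw [ha m (by omega), map_zero, zero_mul]
  have trunc : ∀ n : ℤ,
      (∑ m ∈ Finset.Icc n A₀, slsSmulL σ (a m) (Ee m))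
        = ((fun p => if p ∈ Finset.Icc n A₀ then a p else 0, 0) : SLS R) := by
    intro n
    refine Prod.ext_iff.2 ⟨funext fun p => ?_, funext fun p => ?_⟩
    · rw [coefsum1]
      rw [Finset.sum_congr rfl (fun m (hm : m ∈ Finset.Icc n A₀) => by
        show a m * dl m p = if p = m then a p else 0
        rcases eq_or_ne p m with hpm | hpm
        · subst hpm; simp [dl]
        · simp [dl, hpm, Ne.symm hpm])]
      rw [Finset.sum_ite_eq]
    · rw [coefsum2]
      refine Finset.sum_eq_zero fun m _ => ?_
      show σ (a m) * (0 : ℤ → R) p = 0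
      simp
  have hwa' : ∀ n : ℤ,
      Wt (((fun p => if p ∈ Finset.Icc n A₀ then a p else 0, 0)) : SLS R)
        ((2*A₀ + 1) ⊔ (2*n - 1)) := by
    intro n
    refine ⟨fun p hp => ?_, fun p _ => rfl⟩
    have h1 : 2*A₀ + 1 < 2*p := lt_of_le_of_lt (le_max_left _ _) hp
    show (if p ∈ Finset.Icc n A₀ then a p else 0) = 0
    rw [if_neg (by rw [Finset.mem_Icc]; omega)]
  have hwd : ∀ n : ℤ,
      Wt (((fun p => a p - (if p ∈ Finset.Icc n A₀ then a p else 0), 0)) : SLS R)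
        (2*n - 1) := by
    intro n
    refine ⟨fun p hp => ?_, fun p _ => rfl⟩
    show a p - (if p ∈ Finset.Icc n A₀ then a p else 0) = 0
    rcases le_or_gt p A₀ with h | h
    · rw [if_pos (Finset.mem_Icc.2 ⟨by omega, h⟩), sub_self]
    · rw [ha p h, if_neg (by rw [Finset.mem_Icc]; omega), sub_self]
  have split : ∀ n : ℤ, slsExpBar B N ((a, 0) : SLS R)
      = slsExpBar B N ((fun p => if p ∈ Finset.Icc n A₀ then a p else 0, 0) : SLS R)
        + slsExpBar B N ((fun p => a p - (if p ∈ Finset.Icc n A₀ then a p else 0), 0) : SLS R) := by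
    intro n
    have hda : ((a, 0) : SLS R)
        = ((fun p => if p ∈ Finset.Icc n A₀ then a p else 0, 0) : SLS R)
          + ((fun p => a p - (if p ∈ Finset.Icc n A₀ then a p else 0), 0) : SLS R) := by
      refine Prod.ext_iff.2 ⟨funext fun p => ?_, funext fun p => ?_⟩
      · show a p = (if p ∈ Finset.Icc n A₀ then a p else 0)
          + (a p - (if p ∈ Finset.Icc n A₀ then a p else 0))
        abel
      · show (0:R) = 0 + 0
        rw [add_zero]
    conv_lhs => rw [hda]
    exact exp_add B N (hwa' n) ((hwd n).mono (by omega))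
  ext n
  · show (∑ᶠ m : ℤ, (slsSmulL σ (a m) (slsExpBar B N (Ee m))).1 n) = _
    rw [fsZ _ (Finset.Icc n A₀) (vanish1 n), ← coefsum1, key (Finset.Icc n A₀)
        (fun m hm => (Finset.mem_Icc.1 hm).2), trunc n, split n]
    show _ = (slsExpBar B N ((fun p => if p ∈ Finset.Icc n A₀ then a p else 0, 0) : SLS R)).1 n
        + (slsExpBar B N ((fun p => a p - (if p ∈ Finset.Icc n A₀ then a p else 0), 0) : SLS R)).1 n
    rw [((hwd n).exp B N).1 n (by omega), add_zero]
  · show (∑ᶠ m : ℤ, (slsSmulL σ (a m) (slsExpBar B N (Ee m))).2 n) = _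
    rw [fsZ _ (Finset.Icc n A₀) (vanish2 n), ← coefsum2, key (Finset.Icc n A₀)
        (fun m hm => (Finset.mem_Icc.1 hm).2), trunc n, split n]
    show _ = (slsExpBar B N ((fun p => if p ∈ Finset.Icc n A₀ then a p else 0, 0) : SLS R)).2 n
        + (slsExpBar B N ((fun p => a p - (if p ∈ Finset.Icc n A₀ then a p else 0), 0) : SLS R)).2 n
    rw [((hwd n).exp B N).2 n (by omega), add_zero]

lemma phi_mul (b : ℤ → R) : slsMul σ slsPhi ((b, 0) : SLS R) = ((0, b) : SLS R) := by
  ext n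
  · show conv (0 : ℤ → R) b n = 0
    rw [conv_zero_left]; rfl
  · show conv (fun k => σ ((0 : ℤ → R) k)) (0 : ℤ → R) n + conv (dl 0) b n = b n
    rw [conv_zero_right, conv_dl_left]
    simp

end MONO
end St6

/-- with `(x̃, φ̃) = (exp(T̄)(x), exp(T̄)(φ))`, the element `x̃` is
invertible in `R((x⁻¹))[φ]` (with inverse `Y`), and for every `H̄ ∈ R((x⁻¹))[φ]` the
substitution `H̄(x̃, φ̃)` is (coefficientwise well defined and) equal to `exp(T̄)(H̄)`. -/
theorem statement6
    (σ : R →+* R) (hσ : ∀ r : R, σ (σ r) = r)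
    (hcomm : ∀ u v : R, σ u = u → u * v = v * u)
    (hanti : ∀ u v : R, σ u = -u → σ v = -v → u * v = -(v * u))
    (B N : ℕ → R) (hB : ∀ j, σ (B j) = B j) (hN : ∀ j, σ (N j) = -(N j)) :
    ∃ Y : SLS R, SuppBddAbove Y.1 ∧ SuppBddAbove Y.2 ∧
      slsMul σ (slsExpBar B N slsX) Y = slsOne ∧
      slsMul σ Y (slsExpBar B N slsX) = slsOne ∧
      ∀ u : SLS R, SuppBddAbove u.1 → SuppBddAbove u.2 →
        slsSubst σ u (slsExpBar B N slsX) Y (slsExpBar B N slsPhi) = slsExpBar B N u := by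
  classical
  have hXE : (slsX : SLS R) = St6.Ee 1 := rfl
  have wY : St6.Wt (slsExpBar B N (St6.Ee (-1))) (2 * (-1)) := (St6.wt_Ee (-1)).exp B N
  refine ⟨slsExpBar B N (St6.Ee (-1)), ⟨_, wY.bnd1⟩, ⟨_, wY.bnd2⟩, ?_, ?_, ?_⟩
  · rw [hXE, ← St6.exp_mul σ B N hσ hcomm hanti hB hN (St6.wt_Ee 1) (St6.wt_Ee (-1)),
      St6.slsMul_Ee, show (1 + -1 : ℤ) = 0 by ring, ← St6.slsOne_eq, St6.exp_one]
  · rw [hXE, ← St6.exp_mul σ B N hσ hcomm hanti hB hN (St6.wt_Ee (-1)) (St6.wt_Ee 1),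
      St6.slsMul_Ee, show (-1 + 1 : ℤ) = 0 by ring, ← St6.slsOne_eq, St6.exp_one]
  · intro u hu1 hu2
    obtain ⟨A1, hA1⟩ := hu1
    obtain ⟨A2, hA2⟩ := hu2
    have hA1' : St6.Bnd u.1 A1 := hA1
    have hA2' : St6.Bnd u.2 A2 := hA2
    set W : ℤ := (2*A1 ⊔ (2*A2+1)) ⊔ 0 with hW
    have k1 : 2*A1 ≤ W := le_trans (le_max_left _ _) (le_max_left _ _)
    have k2 : 2*A2+1 ≤ W := le_trans (le_max_right _ _) (le_max_left _ _)
    have hW1 : St6.Wt ((u.1, 0) : SLS R) W :=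
      ⟨fun p hp => hA1' p (by omega), fun p _ => rfl⟩
    have hW2 : St6.Wt ((0, u.2) : SLS R) W :=
      ⟨fun p _ => rfl, fun p hp => hA2' p (by omega)⟩
    have wu2 : St6.Wt ((u.2, 0) : SLS R) (2*A2 ⊔ 0) :=
      ⟨fun p hp => hA2' p (by
        have := le_max_left (2*A2) (0:ℤ); omega), fun p _ => rfl⟩
    have hsum : ((u.1, 0) : SLS R) + ((0, u.2) : SLS R) = u := by
      refine Prod.ext_iff.2 ⟨funext fun p => ?_, funext fun p => ?_⟩
      · show u.1 p + 0 = u.1 p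
        rw [add_zero]
      · show 0 + u.2 p = u.2 p
        rw [zero_add]
    simp only [slsSubst, hXE, St6.zpow_exp σ B N hσ hcomm hanti hB hN]
    rw [St6.subst_line σ B N hσ hcomm hanti hB hN u.1 A1 hA1',
      St6.subst_line σ B N hσ hcomm hanti hB hN u.2 A2 hA2',
      ← St6.exp_mul σ B N hσ hcomm hanti hB hN St6.wt_phi wu2,
      St6.phi_mul σ u.2, ← St6.exp_add B N hW1 hW2, hsum]

end
end

section
/- Let R be a supercommutative superalgebra over ℚ and let R((x))[φ] be the superalgebra of formal Laurent series in the even variable x (finitely many negative powers) together with the odd variable φ, with odd superderivation D(a, b) = (b, a′). Let f, g ∈ R((x)) be series all of whose coefficients lie in R⁰, let ψ, ξ ∈ R((x)) be series all of whose coefficients lie in R¹, and set x̃ = f + φξ = (f, ξ) and φ̃ = ψ + φg = (ψ, g). Then the superconformality condition D x̃ = φ̃ · (D φ̃) holds in R((x))[φ] if and only if ξ = gψ and g² = f′ + ψψ′ in R((x)), where ′ = d/dx. -/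
/- A supercommutative superalgebra over `ℚ` is encoded as a `ℚ`-algebra `R` together with its
grading involution `σ : R →+* R` (`σ = id` on `R⁰`, `σ = −id` on `R¹`; over `ℚ` the data of
the direct sum decomposition `R = R⁰ ⊕ R¹` is equivalent to that of `σ`), with
supercommutativity expressed by: even elements are central, and odd elements anticommute.
Thus `r ∈ R⁰` is expressed as `σ r = r` and `r ∈ R¹` as `σ r = −r`.

An element `a + φb` of `R((x))[φ]` is encoded as the pair `(a, b)` of its coefficient
functions `ℤ → R`; membership in `R((x))` corresponds to the support being bounded below. -/

noncomputable section

variable {R : Type*} [Ring R] [Algebra ℚ R]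

/-- Support bounded below: finitely many negative powers of `x`. -/
def SuppBddBelow (a : ℤ → R) : Prop := ∃ N : ℤ, ∀ n : ℤ, n < N → a n = 0

/-- The derivative `′ = d/dx` on coefficient functions. -/
def derivZ (a : ℤ → R) : ℤ → R := fun n => (n + 1) • a (n + 1)

/-- The odd superderivation `D = ∂/∂φ + φ∂/∂x`: `D(a + φb) = b + φa′`. -/
def slsD (u : SLS R) : SLS R := (u.2, derivZ u.1)

lemma conv_swap {R : Type*} [Ring R] (a b : ℤ → R)
    (h : ∀ k m, a k * b m = b m * a k) : conv a b = conv b a := by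
  funext n
  unfold conv
  rw [← finsum_comp_equiv (Equiv.subLeft n) (f := fun k => b k * a (n - k))]
  refine finsum_congr fun k => ?_
  simp only [Equiv.subLeft_apply, sub_sub_cancel]
  exact h k (n - k)

/-- criterion for formal superconformality: for `f, g` with coefficients
in `R⁰` and `ψ, ξ` with coefficients in `R¹`, and `x̃ = f + φξ`, `φ̃ = ψ + φg`, the
superconformality condition `D x̃ = φ̃·(D φ̃)` holds in `R((x))[φ]` if and only if
`ξ = gψ` and `g² = f′ + ψψ′` in `R((x))`. -/
theorem statement8
    (σ : R →+* R) (hσ : ∀ r : R, σ (σ r) = r)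
    (hcomm : ∀ u v : R, σ u = u → u * v = v * u)
    (hanti : ∀ u v : R, σ u = -u → σ v = -v → u * v = -(v * u))
    (f g ψ ξ : ℤ → R)
    (hf : SuppBddBelow f) (hg : SuppBddBelow g)
    (hψ : SuppBddBelow ψ) (hξ : SuppBddBelow ξ)
    (hfe : ∀ n, σ (f n) = f n) (hge : ∀ n, σ (g n) = g n)
    (hψo : ∀ n, σ (ψ n) = -(ψ n)) (hξo : ∀ n, σ (ξ n) = -(ξ n)) :
    slsD (f, ξ) = slsMul σ (ψ, g) (slsD (ψ, g)) ↔
      (ξ = conv g ψ ∧ conv g g = derivZ f + conv ψ (derivZ ψ)) := by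
  have h1 : conv g ψ = conv ψ g :=
    conv_swap g ψ (fun k m => hcomm (g k) (ψ m) (hge k))
  have h2 : conv (fun k => σ (ψ k)) (derivZ ψ) = -(conv ψ (derivZ ψ)) := by
    funext n
    unfold conv
    simp only [hψo, neg_mul, Pi.neg_apply]
    exact finsum_neg_distrib _
  simp only [slsD, slsMul, Prod.mk.injEq, h2]
  rw [← h1]
  refine and_congr Iff.rfl ?_
  constructor <;> intro h <;> rw [h] <;> abel


end
end

section
/- Let R be a supercommutative superalgebra over ℚ, let R[[x]][φ] be the superalgebra of formal power series in x together with the odd variable φ, with odd superderivation D(a, b) = (b, a′), and let T = −Σ_{j≥1}(A_j L_j(x,φ) + M_{j−1/2} G_{j−1/2}(x,φ)) with (A_j)_{j≥1} in R⁰ and (M_{j−1/2})_{j≥1} in R¹ (see context). Set h = Σ_{j≥1}((j+1)/2)A_jxʲ + φ·Σ_{j≥1} j·M_{j−1/2}x^(j−1), i.e. the pair (Σ_{j≥1}((j+1)/2)A_jxʲ, Σ_{j≥1} j·M_{j−1/2}x^(j−1)) ∈ R[[x]][φ]. Then the commutator identity D∘T − T∘D = l_h∘D holds as operators on R[[x]][φ],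 where l_h denotes left multiplication by h. -/
/- A supercommutative superalgebra over `ℚ` is encoded as a `ℚ`-algebra `R` together with its
grading involution `σ : R →+* R` (`σ = id` on `R⁰`, `σ = −id` on `R¹`; over `ℚ` the data of
the direct sum decomposition `R = R⁰ ⊕ R¹` is equivalent to that of `σ`), with
supercommutativity expressed by: even elements are central, and odd elements anticommute.

An element `a + φb` of `R[[x]][φ]` is encoded as the pair `(a, b)` of power series. -/

noncomputable section

open PowerSeries

/-- Elements `a + φ b` of `R[[x]][φ]`, encoded as pairs `(a, b)` of power series. -/
abbrev SPS (R : Type*) := PowerSeries R × PowerSeries R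

variable {R : Type*} [Ring R] [Algebra ℚ R]

/-- The product `(a + φb)(c + φd) = ac + φ(σ(a)d + bc)` of `R[[x]][φ]`. -/
def spsMul (σ : R →+* R) (u v : SPS R) : SPS R :=
  (u.1 * v.1, PowerSeries.map σ u.1 * v.2 + u.2 * v.1)

/-- The odd superderivation `D = ∂/∂φ + φ∂/∂x`: `D(a + φb) = b + φa′`. -/
def spsD (u : SPS R) : SPS R :=
  (u.2, PowerSeries.mk fun n => (n + 1) • PowerSeries.coeff (n + 1) u.1)

/-- The operator `T = −Σ_{j≥1}(A_j L_j(x,φ) + M_{j−1/2} G_{j−1/2}(x,φ))`, concretely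
`T(a, b) = (Σ_{j≥1} A_j x^(j+1) a′ + Σ_{j≥1} M_{j−1/2} xʲ b,
Σ_{j≥1} A_j (x^(j+1) b′ + ((j+1)/2) xʲ b) + Σ_{j≥1} M_{j−1/2} xʲ a′)`, written
coefficientwise (the variable `M j` stands for `M_{j−1/2}`). -/
def spsT (A M : ℕ → R) (u : SPS R) : SPS R :=
  (PowerSeries.mk fun n => ∑ j ∈ Finset.Icc 1 n,
      (A j * ((n - j) • PowerSeries.coeff (n - j) u.1)
        + M j * PowerSeries.coeff (n - j) u.2),
   PowerSeries.mk fun n => ∑ j ∈ Finset.Icc 1 n,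
      (A j * ((n - j) • PowerSeries.coeff (n - j) u.2
          + (((j : ℚ) + 1) / 2) • PowerSeries.coeff (n - j) u.2)
        + M j * ((n - j + 1) • PowerSeries.coeff (n - j + 1) u.1)))

/-- The even element `h = Σ_{j≥1}((j+1)/2)A_j xʲ + φ·Σ_{j≥1} j·M_{j−1/2}x^(j−1)` of
`R[[x]][φ]`. -/
def hSeries (A M : ℕ → R) : SPS R :=
  (PowerSeries.mk fun n => if n = 0 then 0 else (((n : ℚ) + 1) / 2) • A n,
   PowerSeries.mk fun n => (n + 1) • M (n + 1))

/-- the commutator identity `D∘T − T∘D = l_h∘D` holds as operators on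
`R[[x]][φ]`, where `l_h` is left multiplication by `h`. -/
theorem statement9
    (σ : R →+* R) (hσ : ∀ r : R, σ (σ r) = r)
    (hcomm : ∀ u v : R, σ u = u → u * v = v * u)
    (hanti : ∀ u v : R, σ u = -u → σ v = -v → u * v = -(v * u))
    (A M : ℕ → R) (hA : ∀ j, σ (A j) = A j) (hM : ∀ j, σ (M j) = -(M j))
    (u : SPS R) :
    spsD (spsT A M u) - spsT A M (spsD u) = spsMul σ (hSeries A M) (spsD u) := by
  obtain ⟨a, b⟩ := u
  refine Prod.ext ?_ ?_ <;> ext n <;>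
    simp [spsD, spsT, spsMul, hSeries, PowerSeries.coeff_mul, map_sub,
      Finset.Nat.sum_antidiagonal_eq_sum_range_succ_mk]
  · rw [← Finset.sum_sub_distrib,
      show Finset.range (n+1) = insert 0 (Finset.Icc 1 n) by ext x; simp; omega,
      Finset.sum_insert (by simp), if_pos rfl, zero_add]
    refine Finset.sum_congr rfl fun x hx => ?_
    rw [if_neg (by simp at hx; omega), mul_add, mul_smul_comm]
    abel
  · have hnm : ∀ (m : ℕ) (r : R), (m : R) * r = (m : ℚ) • r := fun m r => by
      rw [← nsmul_eq_mul, ← Nat.cast_smul_eq_nsmul ℚ]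
    have hs : ∀ (q : ℚ) (r : R), σ (q • r) = q • σ r := fun q r => map_rat_smul σ.toAddMonoidHom q r
    simp only [apply_ite σ, map_zero, hs, hA]
    have hre : ∑ x ∈ Finset.range (n+1), (↑x + 1) * M (x + 1) * (PowerSeries.coeff (n - x)) b
        = ∑ j ∈ Finset.Icc 1 (n+1), (j : R) * (M j * (PowerSeries.coeff (n + 1 - j)) b) := by
      refine Finset.sum_nbij' (fun i => i + 1) (fun j => j - 1) ?_ ?_ ?_ ?_ ?_ <;>
        intro i hi <;> simp only [Finset.mem_range, Finset.mem_Icc] at * <;> try omega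
      simp [mul_assoc, show (1:ℕ) + i = i + 1 from by omega,
        show n + 1 - (i + 1) = n - i from by omega]
    rw [hre,
      show Finset.range (n+1) = insert 0 (Finset.Icc 1 n) by ext x; simp; omega,
      Finset.sum_insert (by simp), if_pos rfl, zero_mul, zero_add,
      Finset.sum_Icc_succ_top (by omega : 1 ≤ n + 1),
      Finset.sum_Icc_succ_top (by omega : 1 ≤ n + 1)]
    simp only [Nat.sub_self, Nat.cast_zero, zero_mul, mul_zero, zero_add, add_zero]
    have key : (↑n + 1) *
          (∑ x ∈ Finset.Icc 1 n, (A x * (↑(n + 1 - x) * (PowerSeries.coeff (n + 1 - x)) a)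
            + M x * (PowerSeries.coeff (n + 1 - x)) b))
        - ∑ x ∈ Finset.Icc 1 n, (A x * (↑(n - x) * ((↑(n - x) + 1) * (PowerSeries.coeff (n - x + 1)) a)
              + (((x : ℚ) + 1) / 2) • ((↑(n - x) + 1) * (PowerSeries.coeff (n - x + 1)) a))
            + M x * ((↑(n - x) + 1) * (PowerSeries.coeff (n - x + 1)) b))
        = ∑ x ∈ Finset.Icc 1 n, (((x : ℚ) + 1) / 2) • A x * ((↑(n - x) + 1) * (PowerSeries.coeff (n - x + 1)) a)
          + ∑ j ∈ Finset.Icc 1 n, (j : R) * (M j * (PowerSeries.coeff (n + 1 - j)) b) := by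
      rw [Finset.mul_sum, ← Finset.sum_sub_distrib, ← Finset.sum_add_distrib]
      refine Finset.sum_congr rfl fun x hx => ?_
      simp only [Finset.mem_Icc] at hx
      obtain ⟨k, rfl⟩ : ∃ k, n = x + k := ⟨n - x, by omega⟩
      rw [show x + k + 1 - x = k + 1 by omega, show x + k - x = k by omega]
      have h1 : ∀ (m : ℕ) (r : R), ((m:R) + 1) * r = ((m:ℚ) + 1) • r := fun m r => by
        rw [add_mul, one_mul, hnm, add_smul, one_smul]
      simp only [h1, hnm, mul_smul_comm, smul_mul_assoc, mul_add, smul_add, smul_smul]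
      match_scalars <;> push_cast <;> ring
    rw [show (∑ x ∈ Finset.Icc 1 n, (if x = 0 then 0 else (((x:ℚ) + 1) / 2) • A x)
          * ((((n - x : ℕ) : R) + 1) * (PowerSeries.coeff (n - x + 1)) a))
        = ∑ x ∈ Finset.Icc 1 n, ((((x:ℚ) + 1) / 2) • A x)
          * ((((n - x : ℕ) : R) + 1) * (PowerSeries.coeff (n - x + 1)) a) from
      Finset.sum_congr rfl fun x hx => by
        rw [if_neg (by simp only [Finset.mem_Icc] at hx; omega)]]
    conv_lhs => rw [mul_add (((n:R)) + 1)]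
    rw [add_sub_right_comm, key]
    push_cast
    abel
end
end
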